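/- arXiv:1212.5685 — 2 statements merged into one kernel-verified Lean document; each statement's English description precedes it below -/
import Mathlib

section
/- For the transverse electric multipole field E^{TE}_{n,m}(k;x) = −√(n(n+1)) h_n^{(1)}(k|x|) V_{n,m}(x̂), the curl is given explicitly by ∇ × E^{TE}_{n,m}(k;x) = (√(n(n+1))/|x|) ℋ_n(k|x|) U_{n,m}(x̂) + (n(n+1)/|x|) h_n^{(1)}(k|x|) Y_n^m(x̂) x̂, where ℋ_n(t) = h_n^{(1)}(t) + t (h_n^{(1)})'(t). -/
open scoped Nat
open Filter Topology

noncomputable section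

abbrev E3 := EuclideanSpace ℝ (Fin 3)

/-- Partial derivative in the `i`-th coordinate direction. -/
noncomputable def pd (i : Fin 3) (g : E3 → ℂ) (x : E3) : ℂ :=
  deriv (fun s : ℝ => g (x + s • EuclideanSpace.single i (1 : ℝ))) 0

/-- Curl of a complex vector field on `ℝ³`. -/
noncomputable def curl (F : E3 → Fin 3 → ℂ) (x : E3) : Fin 3 → ℂ :=
  ![pd 1 (fun y => F y 2) x - pd 2 (fun y => F y 1) x,
    pd 2 (fun y => F y 0) x - pd 0 (fun y => F y 2) x,
    pd 0 (fun y => F y 1) x - pd 1 (fun y => F y 0) x]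

/-- The Laplacian on `ℝ³`. -/
noncomputable def lap (f : E3 → ℂ) (x : E3) : ℂ :=
  ∑ i : Fin 3, iteratedDeriv 2 (fun s : ℝ => f (x + s • EuclideanSpace.single i (1 : ℝ))) 0

/-- Spherical Bessel function of the first kind. -/
noncomputable def sphJ (n : ℕ) (t : ℝ) : ℝ :=
  ∑' l : ℕ, (-1 : ℝ) ^ l * t ^ (n + 2 * l) /
    (2 ^ l * (l.factorial : ℝ) * ((2 * n + 2 * l + 1).doubleFactorial : ℝ))

/-- Spherical Bessel function of the second kind. -/
noncomputable def sphY (n : ℕ) (t : ℝ) : ℝ :=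
  -(((2 * n).factorial : ℝ) / (2 ^ n * (n.factorial : ℝ))) *
    ∑' l : ℕ, (-1 : ℝ) ^ l * t ^ (2 * l) /
      (t ^ (n + 1) * 2 ^ l * (l.factorial : ℝ) *
        ∏ i ∈ Finset.range l, (-2 * (n : ℝ) + 2 * (i : ℝ) + 1))

/-- Spherical Hankel function of the first kind. -/
noncomputable def sphH (n : ℕ) (t : ℝ) : ℂ :=
  (sphJ n t : ℂ) + Complex.I * (sphY n t : ℂ)

/-- Surface gradient (tangential part of the gradient) of a complex function,
evaluated at a point of the unit sphere. -/
noncomputable def surfGradC (f : E3 → ℂ) (x : E3) : Fin 3 → ℂ :=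
  fun i => pd i f x - (∑ j : Fin 3, pd j f x * (x j : ℂ)) * (x i : ℂ)

/-- Complexification of a real vector. -/
noncomputable def toC (x : E3) : Fin 3 → ℂ := fun i => (x i : ℂ)

/-- `U_{n,m} = (1/√(n(n+1))) ∇_S Y_n^m`, as a complex tangential field. -/
noncomputable def vshU (n : ℕ) (Y : E3 → ℂ) (x : E3) : Fin 3 → ℂ :=
  fun i => (1 / (Real.sqrt ((n : ℝ) * ((n : ℝ) + 1)) : ℂ)) * surfGradC Y x i

/-- `V_{n,m} = x̂ × U_{n,m}`. -/
noncomputable def vshV (n : ℕ) (Y : E3 → ℂ) (x : E3) : Fin 3 → ℂ :=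
  crossProduct (toC x) (vshU n Y x)

/-- Exterior transverse electric multipole
`E^{TE}_{n,m}(x) = -√(n(n+1)) h_n^{(1)}(k|x|) V_{n,m}(x̂)`. -/
noncomputable def ETE (n : ℕ) (Y : E3 → ℂ) (k : ℝ) (x : E3) : Fin 3 → ℂ :=
  fun i => -(Real.sqrt ((n : ℝ) * ((n : ℝ) + 1)) : ℂ) * sphH n (k * ‖x‖) *
    vshV n Y (‖x‖⁻¹ • x) i

/-- `ℋ_n(t) = h_n^{(1)}(t) + t (h_n^{(1)})'(t)`. -/
noncomputable def calH (n : ℕ) (t : ℝ) : ℂ :=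
  sphH n t + (t : ℂ) * deriv (sphH n) t

lemma summable_expser (C z : ℝ) {f : ℕ → ℝ} (hf0 : ∀ l, 0 ≤ f l)
    (h : ∀ l, f l ≤ C * z ^ l / l.factorial) : Summable f := by
  refine Summable.of_nonneg_of_le hf0 h ?_
  have := (Real.summable_pow_div_factorial z).mul_left C
  simpa [mul_div_assoc] using this

lemma le_two_pow (l : ℕ) : (l : ℝ) ≤ 2 ^ l := by
  induction l with
  | zero => norm_num
  | succ m ih =>
    have h1 : (1:ℝ) ≤ 2 ^ m := one_le_pow₀ (by norm_num)
    push_cast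
    rw [pow_succ]
    nlinarith

lemma differentiableAt_sphJ (n : ℕ) (hn : 1 ≤ n) (t : ℝ) :
    DifferentiableAt ℝ (sphJ n) t := by
  set R : ℝ := |t| + 1 with hR
  have hR1 : (1:ℝ) ≤ R := by rw [hR]; linarith [abs_nonneg t]
  have hR0 : (0:ℝ) < R := lt_of_lt_of_le one_pos hR1
  set g : ℕ → ℝ → ℝ := fun l y => (-1 : ℝ) ^ l * y ^ (n + 2 * l) /
    (2 ^ l * (l.factorial : ℝ) * (((2 * n + 2 * l + 1).doubleFactorial : ℕ) : ℝ)) with hg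
  set g' : ℕ → ℝ → ℝ := fun l y =>
    ((-1 : ℝ) ^ l * (((n + 2 * l : ℕ)) * y ^ (n + 2 * l - 1))) /
      (2 ^ l * (l.factorial : ℝ) * (((2 * n + 2 * l + 1).doubleFactorial : ℕ) : ℝ)) with hg'
  set u : ℕ → ℝ := fun l => ((n + 2 * l : ℕ) : ℝ) * R ^ (n + 2 * l - 1) /
    (2 ^ l * (l.factorial : ℝ)) with hu
  have hK : ∀ l : ℕ, (0:ℝ) < 2 ^ l * (l.factorial : ℝ) := by
    intro l; positivity
  have hdf : ∀ l : ℕ, (1:ℝ) ≤ (((2 * n + 2 * l + 1).doubleFactorial : ℕ) : ℝ) := by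
    intro l
    exact_mod_cast Nat.one_le_iff_ne_zero.2 (Nat.doubleFactorial_pos _).ne'
  have husum : Summable u := by
    refine summable_expser ((n + 2) * R ^ (n - 1)) (2 * R ^ 2) (fun l => by positivity) ?_
    intro l
    have h1 : ((n + 2 * l : ℕ) : ℝ) ≤ (n + 2) * 2 ^ l := by
      have h2 : (l : ℝ) ≤ 2 ^ l := le_two_pow l
      have h3 : (1:ℝ) ≤ 2 ^ l := one_le_pow₀ (by norm_num)
      push_cast; nlinarith
    have he : n + 2 * l - 1 = (n - 1) + 2 * l := by omega
    have h4 : R ^ (n + 2 * l - 1) = R ^ (n - 1) * (R ^ 2) ^ l := by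
      rw [he, pow_add, pow_mul]
    rw [hu]
    simp only
    rw [h4]
    rw [div_le_div_iff₀ (hK l) (by positivity)]
    have hfl : (1:ℝ) ≤ (l.factorial : ℝ) := by exact_mod_cast Nat.one_le_iff_ne_zero.2 l.factorial_ne_zero
    have : (2 * R ^ 2) ^ l = 2 ^ l * (R ^ 2) ^ l := by rw [mul_pow]
    rw [this]
    have hRn1 : (0:ℝ) ≤ R ^ (n-1) := by positivity
    have hRl : (0:ℝ) ≤ (R^2) ^ l := by positivity
    have A : ((n + 2*l:ℕ):ℝ) * (R^(n-1) * (R^2)^l) * (l.factorial:ℝ) ≤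
        ((n:ℝ)+2) * 2^l * (R^(n-1)*(R^2)^l) * (l.factorial:ℝ) := by
      nlinarith [mul_le_mul_of_nonneg_right h1
        (show (0:ℝ) ≤ (R^(n-1)*(R^2)^l) * (l.factorial:ℝ) by positivity)]
    have hX : (0:ℝ) ≤ ((n:ℝ)+2) * 2^l * (R^(n-1)*(R^2)^l) * (l.factorial:ℝ) := by positivity
    have B := le_mul_of_one_le_right hX (one_le_pow₀ (by norm_num : (1:ℝ) ≤ 2) (n := l))
    nlinarith [A, B]
  have key : HasDerivAt (fun z => ∑' l, g l z) (∑' l, g' l t) t := by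
    refine hasDerivAt_tsum_of_isPreconnected (y₀ := 0) husum (Metric.isOpen_ball (x := (0:ℝ)) (ε := R))
      (convex_ball (0:ℝ) R).isPreconnected ?_ ?_ ?_ ?_ ?_
    · intro l y _
      have := ((hasDerivAt_pow (n + 2 * l) y).const_mul ((-1:ℝ) ^ l)).div_const
        (2 ^ l * (l.factorial : ℝ) * (((2 * n + 2 * l + 1).doubleFactorial : ℕ) : ℝ))
      convert this using 1
      all_goals simp only [hg']
      all_goals push_cast
      all_goals ring
    · intro l y hy
      rw [Real.norm_eq_abs, hg', hu]
      simp only [abs_div, abs_mul, abs_pow, abs_neg, abs_one, one_pow, one_mul]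
      have hyR : |y| ≤ R := le_of_lt (by simpa [Real.dist_eq] using hy)
      have h5 : |y| ^ (n + 2*l - 1) ≤ R ^ (n + 2*l -1) := pow_le_pow_left₀ (abs_nonneg y) hyR _
      have h6 : |(2:ℝ)|^l * |(l.factorial:ℝ)| * |(((2 * n + 2 * l + 1).doubleFactorial : ℕ) : ℝ)|
          = 2 ^ l * (l.factorial : ℝ) * (((2 * n + 2 * l + 1).doubleFactorial : ℕ) : ℝ) := by
        rw [abs_of_nonneg (by positivity : (0:ℝ) ≤ (2:ℝ)), abs_of_nonneg (by positivity),
          abs_of_nonneg (by positivity)]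
      rw [h6, abs_of_nonneg (by positivity : (0:ℝ) ≤ ((n + 2*l : ℕ):ℝ))]
      refine div_le_div₀ (by positivity) ?_ (hK l) ?_
      · exact mul_le_mul_of_nonneg_left h5 (by positivity)
      · nlinarith [hK l, hdf l]
    · exact Metric.mem_ball_self hR0
    · have : ∀ l, g l 0 = 0 := by
        intro l
        rw [hg]
        simp only
        rw [zero_pow (by omega : n + 2*l ≠ 0)]
        simp
      simpa [this] using summable_zero
    · have : |t| < R := by rw [hR]; linarith
      simpa [Real.dist_eq] using this
  have heq : sphJ n = fun z => ∑' l, g l z := rfl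
  rw [heq]
  exact key.differentiableAt

set_option maxHeartbeats 2000000 in
lemma differentiableAt_sphY (n : ℕ) (hn : 1 ≤ n) {t : ℝ} (ht : 0 < t) :
    DifferentiableAt ℝ (sphY n) t := by
  set P : ℕ → ℝ := fun l => ∏ i ∈ Finset.range l, (-2 * (n : ℝ) + 2 * (i : ℝ) + 1) with hP
  have hfac : ∀ i : ℕ, (1:ℝ) ≤ |(-2*(n:ℝ) + 2*(i:ℝ) + 1)| := by
    intro i
    have hz : ((-2*(n:ℤ) + 2*(i:ℤ) + 1 : ℤ):ℝ) = -2*(n:ℝ) + 2*(i:ℝ) + 1 := by push_cast; ring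
    rw [← hz, ← Int.cast_abs]
    have hz0 : (-2*(n:ℤ) + 2*(i:ℤ) + 1) ≠ 0 := by omega
    exact_mod_cast Int.one_le_abs hz0
  have hP1 : ∀ l, (1:ℝ) ≤ |P l| := by
    intro l
    induction l with
    | zero => simp [hP]
    | succ m ih =>
      have hPs : P (m+1) = P m * (-2*(n:ℝ)+2*(m:ℝ)+1) := by
        rw [hP]; simp only; rw [Finset.prod_range_succ]
      rw [hPs, abs_mul]
      nlinarith [hfac m, abs_nonneg (P m)]
  have hPne : ∀ l, P l ≠ 0 := fun l => by
    intro h; have := hP1 l; rw [h, abs_zero] at this; linarith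
  set M : ℝ := 2 * t + 1 with hM
  have hM1 : (1:ℝ) ≤ M := by rw [hM]; linarith
  have hM0 : (0:ℝ) < M := lt_of_lt_of_le one_pos hM1
  set g : ℕ → ℝ → ℝ := fun l y => (-1 : ℝ) ^ l * y ^ (2 * l) /
      (y ^ (n + 1) * 2 ^ l * (l.factorial : ℝ) * P l) with hg
  set g' : ℕ → ℝ → ℝ := fun l y =>
      ((-1 : ℝ) ^ l * (((2*l : ℕ):ℝ) * y ^ (2*l - 1)) * (y ^ (n + 1) * 2 ^ l * (l.factorial : ℝ) * P l)
        - (-1 : ℝ) ^ l * y ^ (2 * l) *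
          ((((n+1 : ℕ):ℝ) * y ^ (n+1-1) * 2 ^ l) * (l.factorial : ℝ) * P l)) /
      (y ^ (n + 1) * 2 ^ l * (l.factorial : ℝ) * P l) ^ 2 with hg'
  set u : ℕ → ℝ := fun l => ((2*l + n + 1 : ℕ) : ℝ) * (M ^ (n+1) * (M ^ 2) ^ l) /
      ((t/2) ^ (2*n+2) * (2 ^ l * (l.factorial : ℝ))) with hu
  have ht2 : (0:ℝ) < t / 2 := by linarith
  have husum : Summable u := by
    refine summable_expser (((n:ℝ) + 3) * M ^ (n+1) / (t/2) ^ (2*n+2)) (M ^ 2)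
      (fun l => by positivity) ?_
    intro l
    have h1 : ((2*l + n + 1 : ℕ) : ℝ) ≤ ((n:ℝ) + 3) * 2 ^ l := by
      have h2 : (l : ℝ) ≤ 2 ^ l := le_two_pow l
      have h3 : (1:ℝ) ≤ 2 ^ l := one_le_pow₀ (by norm_num)
      push_cast; nlinarith
    have hstep : u l ≤ (((n:ℝ)+3) * M ^ (n+1) * (M^2)^l) / ((t/2) ^ (2*n+2) * (l.factorial : ℝ)) := by
      rw [hu]
      simp only
      rw [div_le_div_iff₀ (by positivity) (by positivity)]
      have hA := mul_le_mul_of_nonneg_right h1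
        (show (0:ℝ) ≤ M ^ (n+1) * (M^2)^l * ((t/2) ^ (2*n+2) * (l.factorial : ℝ)) by positivity)
      nlinarith [hA]
    refine hstep.trans_eq ?_
    rw [div_mul_eq_mul_div, div_div]
  have key : HasDerivAt (fun z => ∑' l, g l z) (∑' l, g' l t) t := by
    refine hasDerivAt_tsum_of_isPreconnected (y₀ := t) husum
      (isOpen_Ioo (a := t/2) (b := 2*t)) (convex_Ioo (t/2) (2*t)).isPreconnected ?_ ?_ ?_ ?_ ?_
    · intro l y hy
      have hy0 : 0 < y := lt_trans ht2 hy.1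
      have hnum : HasDerivAt (fun y : ℝ => (-1 : ℝ) ^ l * y ^ (2*l))
          ((-1 : ℝ) ^ l * (((2*l : ℕ):ℝ) * y ^ (2*l - 1))) y := by
        have := (hasDerivAt_pow (2*l) y).const_mul ((-1:ℝ) ^ l)
        convert this using 2
      have hden : HasDerivAt (fun y : ℝ => y ^ (n + 1) * 2 ^ l * (l.factorial : ℝ) * P l)
          ((((n+1 : ℕ):ℝ) * y ^ (n+1-1) * 2 ^ l) * (l.factorial : ℝ) * P l) y :=
        (((hasDerivAt_pow (n+1) y).mul_const ((2:ℝ) ^ l)).mul_const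
          ((l.factorial : ℝ))).mul_const (P l)
      have hdne : y ^ (n + 1) * 2 ^ l * (l.factorial : ℝ) * P l ≠ 0 := by
        have := hPne l
        positivity
      exact hnum.div hden hdne
    · intro l y hy
      obtain ⟨hy1, hy2⟩ := hy
      have hy0 : 0 < y := lt_trans ht2 hy1
      have hyM : y ≤ M := by rw [hM]; linarith
      have hQ := hP1 l
      have hfl0 : (0:ℝ) < (l.factorial : ℝ) := by positivity
      have p1 : y ^ (2*l - 1) ≤ (M^2)^l := by
        calc y ^ (2*l-1) ≤ M ^ (2*l-1) := pow_le_pow_left₀ hy0.le hyM _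
        _ ≤ M ^ (2*l) := pow_le_pow_right₀ hM1 (by omega)
        _ = (M^2)^l := by rw [← pow_mul]
      have p2 : y ^ (n+1) ≤ M ^ (n+1) := pow_le_pow_left₀ hy0.le hyM _
      have p3 : y ^ (2*l) ≤ (M^2)^l := by
        calc y ^ (2*l) ≤ M ^ (2*l) := pow_le_pow_left₀ hy0.le hyM _
        _ = (M^2)^l := by rw [← pow_mul]
      have p4 : y ^ n ≤ M ^ (n+1) := by
        calc y ^ n ≤ M ^ n := pow_le_pow_left₀ hy0.le hyM _
        _ ≤ M ^ (n+1) := pow_le_pow_right₀ hM1 (by omega)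
      have e1 : |y| = y := abs_of_pos hy0
      have e2 : |(2:ℝ)| = 2 := by norm_num
      have e3 : |(l.factorial : ℝ)| = (l.factorial : ℝ) := abs_of_pos hfl0
      have e4 : |((2*l : ℕ):ℝ)| = ((2*l:ℕ):ℝ) := abs_of_nonneg (by positivity)
      have e5 : |((n+1 : ℕ):ℝ)| = ((n+1:ℕ):ℝ) := abs_of_nonneg (by positivity)
      have habs1 : |(-1 : ℝ) ^ l * (((2*l : ℕ):ℝ) * y ^ (2*l - 1)) *
          (y ^ (n + 1) * 2 ^ l * (l.factorial : ℝ) * P l)|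
          ≤ (2*(l:ℝ)) * (M ^ (n+1) * (M^2)^l) * ((2 ^ l * (l.factorial : ℝ)) * |P l|) := by
        simp only [abs_mul, abs_pow, abs_neg, abs_one, one_pow, one_mul, e1, e2, e3, e4]
        have q : y ^ (2*l-1) * y ^ (n+1) ≤ (M^2)^l * M ^ (n+1) :=
          mul_le_mul p1 p2 (by positivity) (by positivity)
        have r := mul_le_mul_of_nonneg_left q
          (show (0:ℝ) ≤ 2*(l:ℝ) * (2 ^ l * (l.factorial:ℝ) * |P l|) by positivity)
        push_cast
        nlinarith [r]
      have habs2 : |(-1 : ℝ) ^ l * y ^ (2 * l) *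
          ((((n+1 : ℕ):ℝ) * y ^ (n+1-1) * 2 ^ l) * (l.factorial : ℝ) * P l)|
          ≤ ((n:ℝ)+1) * (M ^ (n+1) * (M^2)^l) * ((2 ^ l * (l.factorial : ℝ)) * |P l|) := by
        simp only [abs_mul, abs_pow, abs_neg, abs_one, one_pow, one_mul, e1, e2, e3, e5,
          Nat.add_sub_cancel]
        have q : y ^ (2*l) * y ^ n ≤ (M^2)^l * M ^ (n+1) :=
          mul_le_mul p3 p4 (by positivity) (by positivity)
        have r := mul_le_mul_of_nonneg_left q
          (show (0:ℝ) ≤ ((n:ℝ)+1) * (2 ^ l * (l.factorial:ℝ) * |P l|) by positivity)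
        push_cast
        nlinarith [r]
      have hDge : ((t/2) ^ (2*n+2)) * (2 ^ l * (l.factorial : ℝ))^2 * (P l)^2
          ≤ (y ^ (n + 1) * 2 ^ l * (l.factorial : ℝ) * P l) ^ 2 := by
        have he : (y ^ (n + 1) * 2 ^ l * (l.factorial : ℝ) * P l) ^ 2
            = (y ^ (n+1))^2 * (2 ^ l * (l.factorial : ℝ))^2 * (P l)^2 := by ring
        rw [he]
        have he2 : (t/2) ^ (2*n+2) = ((t/2) ^ (n+1))^2 := by rw [← pow_mul]; ring_nf
        rw [he2]
        have h1 : (t/2) ^ (n+1) ≤ y ^ (n+1) := pow_le_pow_left₀ ht2.le hy1.le _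
        have h2 : ((t/2) ^ (n+1))^2 ≤ (y ^ (n+1))^2 := by
          nlinarith [pow_pos ht2 (n+1), pow_pos hy0 (n+1)]
        nlinarith [sq_nonneg ((2 ^ l * (l.factorial : ℝ)) * P l), h2,
          mul_le_mul_of_nonneg_right h2 (show (0:ℝ) ≤ (2 ^ l * (l.factorial : ℝ))^2 * (P l)^2 by positivity)]
      rw [Real.norm_eq_abs, hg']
      simp only
      rw [abs_div, abs_pow, sq_abs]
      have hNle : |(-1 : ℝ) ^ l * (((2*l : ℕ):ℝ) * y ^ (2*l - 1)) *
            (y ^ (n + 1) * 2 ^ l * (l.factorial : ℝ) * P l)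
          - (-1 : ℝ) ^ l * y ^ (2 * l) *
            ((((n+1 : ℕ):ℝ) * y ^ (n+1-1) * 2 ^ l) * (l.factorial : ℝ) * P l)|
          ≤ ((2*l + n + 1 : ℕ):ℝ) * (M ^ (n+1) * (M^2)^l) * ((2 ^ l * (l.factorial : ℝ)) * |P l|) := by
        refine (abs_sub _ _).trans ?_
        have : ((2*l + n + 1 : ℕ):ℝ) = 2*(l:ℝ) + ((n:ℝ)+1) := by push_cast; ring
        rw [this]
        nlinarith [habs1, habs2]
      have hpos2 : (0:ℝ) < ((t/2) ^ (2*n+2)) * (2 ^ l * (l.factorial : ℝ))^2 * (P l)^2 := by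
        have := hPne l
        positivity
      have h1 := div_le_div₀ (by positivity) hNle hpos2 hDge
      refine h1.trans ?_
      rw [hu]
      simp only
      rw [div_le_div_iff₀ hpos2 (by positivity)]
      have hPsq : |P l| ≤ (P l)^2 := by nlinarith [hQ, sq_abs (P l)]
      nlinarith [mul_le_mul_of_nonneg_left hPsq
        (show (0:ℝ) ≤ ((2*l + n + 1 : ℕ):ℝ) * (M ^ (n+1) * (M^2)^l) *
          ((t/2) ^ (2*n+2) * (2 ^ l * (l.factorial : ℝ))^2) by positivity)]
    · exact ⟨by linarith, by linarith⟩
    · refine Summable.of_norm ?_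
      refine summable_expser ((t^(n+1))⁻¹) (t^2) (fun l => norm_nonneg _) ?_
      intro l
      rw [Real.norm_eq_abs, hg]
      simp only
      rw [abs_div]
      simp only [abs_mul, abs_pow, abs_neg, abs_one, one_pow, one_mul,
        abs_of_pos ht, abs_of_pos (show (0:ℝ) < 2 by norm_num),
        abs_of_pos (show (0:ℝ) < (l.factorial:ℝ) by positivity)]
      have hQ := hP1 l
      have hbig : t ^ (n+1) * (l.factorial : ℝ) ≤ t ^ (n+1) * 2 ^ l * (l.factorial : ℝ) * |P l| := by
        have h2 : (1:ℝ) ≤ 2 ^ l := one_le_pow₀ (by norm_num)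
        have hX : (0:ℝ) < t^(n+1) * (l.factorial:ℝ) :=
          mul_pos (pow_pos ht (n+1)) (by positivity)
        have h3 : (1:ℝ) ≤ 2^l * |P l| := by nlinarith
        nlinarith [mul_le_mul_of_nonneg_left h3 hX.le]
      have step : t ^ (2*l) / (t ^ (n+1) * 2 ^ l * (l.factorial : ℝ) * |P l|)
          ≤ t ^ (2*l) / (t ^ (n+1) * (l.factorial : ℝ)) :=
        div_le_div_of_nonneg_left (by positivity) (by positivity) hbig
      refine step.trans_eq ?_
      rw [pow_mul]
      field_simp <;> ring
    · exact ⟨by linarith, by linarith⟩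
  have heq : sphY n = fun z => -(((2*n).factorial : ℝ) / (2 ^ n * (n.factorial : ℝ))) *
      ∑' l, g l z := rfl
  rw [heq]
  exact key.differentiableAt.const_mul _

lemma differentiableAt_sphH (n : ℕ) (hn : 1 ≤ n) {t : ℝ} (ht : 0 < t) :
    DifferentiableAt ℝ (sphH n) t := by
  have h1 := ((differentiableAt_sphJ n hn t).hasDerivAt).ofReal_comp
  have h2 := ((differentiableAt_sphY n hn ht).hasDerivAt).ofReal_comp
  have h3 := (h1.add (h2.const_mul Complex.I)).differentiableAt
  show DifferentiableAt ℝ (fun s : ℝ => ((sphJ n s : ℂ)) + Complex.I * (sphY n s : ℂ)) t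
  exact h3

def ee (i : Fin 3) : E3 := EuclideanSpace.single i (1 : ℝ)

noncomputable def Dv (Y : E3 → ℂ) (j : Fin 3) (y : E3) : ℂ := fderiv ℝ Y y (ee j)

noncomputable def Hm (Y : E3 → ℂ) (i j : Fin 3) (x : E3) : ℂ := fderiv ℝ (Dv Y j) x (ee i)

lemma hasDerivAt_line {g : E3 → ℂ} {x v : E3} {s₀ : ℝ}
    (hg : DifferentiableAt ℝ g (x + s₀ • v)) :
    HasDerivAt (fun s : ℝ => g (x + s • v)) (fderiv ℝ g (x + s₀ • v) v) s₀ := by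
  have hline : HasDerivAt (fun s : ℝ => x + s • v) v s₀ := by
    simpa using ((hasDerivAt_id s₀).smul_const v).const_add x
  exact hg.hasFDerivAt.comp_hasDerivAt s₀ hline

lemma pd_eq {g : E3 → ℂ} {x : E3} (h : DifferentiableAt ℝ g x) (i : Fin 3) :
    pd i g x = fderiv ℝ g x (ee i) := by
  have h0 : x + (0:ℝ) • ee i = x := by simp
  have h2 := hasDerivAt_line (g := g) (x := x) (v := ee i) (s₀ := 0) (by rw [h0]; exact h)
  rw [h0] at h2
  exact h2.deriv

lemma vec_decomp (v : E3) : v = ∑ j : Fin 3, v j • ee j := by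
  have h := (EuclideanSpace.basisFun (Fin 3) ℝ).sum_repr v
  simp only [EuclideanSpace.basisFun_apply, EuclideanSpace.basisFun_repr] at h
  exact h.symm

lemma apply_sum (L : E3 →L[ℝ] ℂ) (v : E3) :
    L v = ∑ j : Fin 3, (v j : ℂ) * L (ee j) := by
  conv_lhs => rw [vec_decomp v]
  rw [map_sum]
  congr 1
  funext j
  rw [L.map_smul, Complex.real_smul]

lemma contDiff_Dv {Y : E3 → ℂ} (hY : ContDiff ℝ (⊤ : ℕ∞) Y) (j : Fin 3) :
    ContDiff ℝ (⊤ : ℕ∞) (Dv Y j) :=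
  (hY.fderiv_right (mod_cast le_top)).clm_apply contDiff_const

lemma euler_hom {f : E3 → ℂ} {m : ℕ}
    (hhom : ∀ c : ℝ, 0 < c → ∀ y : E3, f (c • y) = (c : ℂ) ^ m * f y)
    (x : E3) (hdf : DifferentiableAt ℝ f x) :
    fderiv ℝ f x x = (m : ℂ) * f x := by
  have h0 : (1:ℝ) • x = x := one_smul ℝ x
  have hline : HasDerivAt (fun c : ℝ => c • x) x 1 := by
    simpa using (hasDerivAt_id (1:ℝ)).smul_const x
  have hdf' : HasFDerivAt f (fderiv ℝ f x) ((1:ℝ) • x) := by rw [h0]; exact hdf.hasFDerivAt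
  have h1 : HasDerivAt (fun c : ℝ => f (c • x)) (fderiv ℝ f x x) 1 := by
    have := hdf'.comp_hasDerivAt 1 hline
    exact this
  have h2 : HasDerivAt (fun c : ℝ => ((c ^ m : ℝ) : ℂ) * f x) ((m : ℂ) * f x) 1 := by
    have := ((hasDerivAt_pow m (1:ℝ)).ofReal_comp).mul_const (f x)
    simpa using this
  have heq : (fun c : ℝ => ((c ^ m : ℝ) : ℂ) * f x) =ᶠ[𝓝 (1:ℝ)] (fun c : ℝ => f (c • x)) := by
    filter_upwards [eventually_gt_nhds zero_lt_one] with c hc0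
    rw [hhom c hc0 x]
    push_cast
    ring
  have h3 : HasDerivAt (fun c : ℝ => f (c • x)) ((m : ℂ) * f x) 1 := h2.congr_of_eventuallyEq heq.symm
  exact h1.unique h3

lemma Dv_hom {Y : E3 → ℂ} {n : ℕ} (hn : 1 ≤ n) (hY : ContDiff ℝ (⊤ : ℕ∞) Y)
    (hYhom : ∀ c : ℝ, 0 < c → ∀ x : E3, Y (c • x) = (c : ℂ) ^ n * Y x)
    (j : Fin 3) (c : ℝ) (hc : 0 < c) (y : E3) :
    Dv Y j (c • y) = (c : ℂ) ^ (n - 1) * Dv Y j y := by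
  have hYd : Differentiable ℝ Y := hY.differentiable (by simp)
  have hsm : HasFDerivAt (fun z : E3 => c • z) (c • ContinuousLinearMap.id ℝ E3) y := by
    have := (c • ContinuousLinearMap.id ℝ E3).hasFDerivAt (x := y)
    exact this
  have hcomp : HasFDerivAt (fun z : E3 => Y (c • z))
      ((fderiv ℝ Y (c • y)).comp (c • ContinuousLinearMap.id ℝ E3)) y :=
    (hYd (c • y)).hasFDerivAt.comp y hsm
  have hconst : HasFDerivAt (fun z : E3 => (c : ℂ) ^ n * Y z)
      ((c : ℂ) ^ n • fderiv ℝ Y y) y := by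
    exact ((hYd y).hasFDerivAt).const_mul ((c:ℂ)^n)
  have hfe : (fun z : E3 => Y (c • z)) = (fun z : E3 => (c : ℂ) ^ n * Y z) :=
    funext fun z => hYhom c hc z
  rw [hfe] at hcomp
  have hder := hcomp.unique hconst
  have happ := congrArg (fun (L : E3 →L[ℝ] ℂ) => L (ee j)) hder
  simp only [ContinuousLinearMap.comp_apply, ContinuousLinearMap.smul_apply,
    ContinuousLinearMap.coe_smul', Pi.smul_apply, ContinuousLinearMap.coe_id', id_eq] at happ
  rw [smul_eq_mul] at happ
  rw [map_smul, Complex.real_smul] at happ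
  have hc0 : ((c : ℝ) : ℂ) ≠ 0 := by exact_mod_cast hc.ne'
  have hpow : ((c:ℝ):ℂ) ^ n = (c:ℂ) * (c:ℂ) ^ (n - 1) := by
    conv_lhs => rw [show n = (n-1) + 1 by omega]
    rw [pow_succ]
    ring
  rw [hpow] at happ
  have : (c:ℂ) * Dv Y j (c • y) = (c:ℂ) * ((c:ℂ) ^ (n-1) * Dv Y j y) := by
    rw [Dv, Dv]
    rw [happ]
    ring
  exact mul_left_cancel₀ hc0 this

lemma symmH {Y : E3 → ℂ} (hY : ContDiff ℝ (⊤ : ℕ∞) Y) (x : E3) (i j : Fin 3) :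
    Hm Y i j x = Hm Y j i x := by
  have hf : ∀ y, HasFDerivAt Y (fderiv ℝ Y y) y := fun y =>
    (hY.differentiable (by simp) y).hasFDerivAt
  have hfd : DifferentiableAt ℝ (fderiv ℝ Y) x :=
    ((hY.fderiv_right (m := (⊤ : ℕ∞)) (mod_cast le_top)).differentiable (by simp)) x
  have hx : HasFDerivAt (fderiv ℝ Y) (fderiv ℝ (fderiv ℝ Y) x) x := hfd.hasFDerivAt
  have hsymm := second_derivative_symmetric hf hx (ee i) (ee j)
  have key : ∀ a b : Fin 3, Hm Y a b x = fderiv ℝ (fderiv ℝ Y) x (ee a) (ee b) := by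
    intro a b
    have h1 : fderiv ℝ (fun y => (fderiv ℝ Y y) (ee b)) x (ee a)
        = fderiv ℝ (fderiv ℝ Y) x (ee a) (ee b) := by
      rw [fderiv_clm_apply hfd (differentiableAt_const _)]
      simp
    exact h1
  rw [key i j, key j i]
  exact hsymm.symm ▸ rfl

lemma traceH {Y : E3 → ℂ} (hY : ContDiff ℝ (⊤ : ℕ∞) Y) (hYharm : ∀ x, lap Y x = 0) (x : E3) :
    ∑ i : Fin 3, Hm Y i i x = 0 := by
  have hYd : Differentiable ℝ Y := hY.differentiable (by simp)
  have hDd : ∀ j, Differentiable ℝ (Dv Y j) := fun j =>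
    (contDiff_Dv hY j).differentiable (by simp)
  have key : ∀ i : Fin 3,
      iteratedDeriv 2 (fun s : ℝ => Y (x + s • EuclideanSpace.single i (1:ℝ))) 0 = Hm Y i i x := by
    intro i
    have hdd : (fun s : ℝ => Y (x + s • EuclideanSpace.single i (1:ℝ)))
        = fun s : ℝ => Y (x + s • ee i) := rfl
    rw [hdd, iteratedDeriv_succ, iteratedDeriv_one]
    have hder : deriv (fun s : ℝ => Y (x + s • ee i)) = fun s => Dv Y i (x + s • ee i) := by
      funext s
      exact (hasDerivAt_line (hYd _)).deriv
    rw [hder]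
    have h0 : x + (0:ℝ) • ee i = x := by simp
    have h2 := hasDerivAt_line (g := Dv Y i) (x := x) (v := ee i) (s₀ := 0)
      (by rw [h0]; exact hDd i x)
    rw [h0] at h2
    rw [h2.deriv]
    rfl
  have := hYharm x
  rw [lap] at this
  calc ∑ i : Fin 3, Hm Y i i x
      = ∑ i : Fin 3, iteratedDeriv 2 (fun s : ℝ => Y (x + s • EuclideanSpace.single i (1:ℝ))) 0 := by
        exact Finset.sum_congr rfl fun i _ => (key i).symm
    _ = 0 := this

lemma norm_sq_eq3 (x : E3) : (x 0)^2 + (x 1)^2 + (x 2)^2 = ‖x‖^2 := by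
  rw [EuclideanSpace.norm_eq]
  rw [Real.sq_sqrt (by positivity)]
  rw [Fin.sum_univ_three]
  simp [sq_abs]

lemma hasDerivAt_norm_line (x : E3) (hx : x ≠ 0) (i : Fin 3) :
    HasDerivAt (fun s : ℝ => ‖x + s • ee i‖) (x i / ‖x‖) 0 := by
  have hnx : (0:ℝ) < ‖x‖ := norm_pos_iff.2 hx
  have hfun : (fun s : ℝ => ‖x + s • ee i‖)
      = fun s : ℝ => Real.sqrt ((x 0)^2 + (x 1)^2 + (x 2)^2 + 2 * (x i) * s + s^2) := by
    funext s
    rw [EuclideanSpace.norm_eq, Fin.sum_univ_three]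
    congr 1
    have ha : ∀ j : Fin 3, (x + s • ee i) j = x j + s * (if j = i then 1 else 0) := by
      intro j
      simp [ee, EuclideanSpace.single_apply]
    rw [ha 0, ha 1, ha 2]
    simp only [Real.norm_eq_abs, sq_abs]
    fin_cases i <;> simp <;> ring
  rw [hfun]
  have hq : HasDerivAt (fun s : ℝ => (x 0)^2 + (x 1)^2 + (x 2)^2 + 2 * (x i) * s + s^2)
      (2 * x i) 0 := by
    have h1 : HasDerivAt (fun s : ℝ => (x 0)^2 + (x 1)^2 + (x 2)^2 + 2 * (x i) * s)
        (2 * x i) 0 := by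
      simpa using ((hasDerivAt_id (0:ℝ)).const_mul (2 * x i)).const_add
        ((x 0)^2 + (x 1)^2 + (x 2)^2)
    have h2 : HasDerivAt (fun s : ℝ => s^2) 0 0 := by
      simpa using hasDerivAt_pow 2 (0:ℝ)
    have := h1.add h2; rw [add_zero] at this; exact this
  have hq0 : (x 0)^2 + (x 1)^2 + (x 2)^2 + 2 * (x i) * 0 + 0^2 = ‖x‖^2 := by
    rw [← norm_sq_eq3]; ring
  have hsq : HasDerivAt Real.sqrt (1 / (2 * Real.sqrt (‖x‖^2)))
      ((x 0)^2 + (x 1)^2 + (x 2)^2 + 2 * (x i) * 0 + 0^2) := by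
    rw [hq0]; exact Real.hasDerivAt_sqrt (by positivity)
  have hcomp := hsq.comp 0 hq
  have hval : x i / ‖x‖ = 1 / (2 * Real.sqrt (‖x‖^2)) * (2 * x i) := by
    rw [Real.sqrt_sq hnx.le]
    field_simp
  rw [hval]
  exact hcomp

set_option maxHeartbeats 2000000 in
lemma pd_A (n : ℕ) (hn : 1 ≤ n) (k : ℝ) (hk : 0 < k) {Y : E3 → ℂ} (hY : ContDiff ℝ (⊤ : ℕ∞) Y)
    {x : E3} (hx : x ≠ 0) (i a b : Fin 3) :
    pd i (fun y => -(sphH n (k * ‖y‖)) * ((((‖y‖ ^ n)⁻¹ : ℝ)) : ℂ) *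
        ((y a : ℂ) * Dv Y b y - (y b : ℂ) * Dv Y a y)) x
      = (((n : ℂ) * sphH n (k * ‖x‖) * ((‖x‖ : ℝ) : ℂ)⁻¹ -
            (k : ℂ) * deriv (sphH n) (k * ‖x‖)) *
            (((‖x‖ : ℝ) : ℂ) ^ n)⁻¹ * (((‖x‖ : ℝ) : ℂ)⁻¹ * (x i : ℂ))) *
          ((x a : ℂ) * Dv Y b x - (x b : ℂ) * Dv Y a x)
        + -(sphH n (k * ‖x‖)) * (((‖x‖ : ℝ) : ℂ) ^ n)⁻¹ *
          ((if a = i then (1:ℂ) else 0) * Dv Y b x + (x a : ℂ) * Hm Y i b x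
            - (if b = i then (1:ℂ) else 0) * Dv Y a x - (x b : ℂ) * Hm Y i a x) := by
  have hr : (0:ℝ) < ‖x‖ := norm_pos_iff.2 hx
  have h0 : x + (0:ℝ) • ee i = x := by simp
  have hDd : ∀ j, Differentiable ℝ (Dv Y j) := fun j => (contDiff_Dv hY j).differentiable (by simp)
  -- derivative of the norm along the line
  have hnl : HasDerivAt (fun s : ℝ => ‖x + s • ee i‖) (x i / ‖x‖) 0 := hasDerivAt_norm_line x hx i
  -- derivative of s ↦ sphH n (k‖x+s e‖)
  have hin : HasDerivAt (fun s : ℝ => k * ‖x + s • ee i‖) (k * (x i / ‖x‖)) 0 := hnl.const_mul k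
  have hHc : HasDerivAt (fun s : ℝ => sphH n (k * ‖x + s • ee i‖))
      ((k * (x i / ‖x‖)) • deriv (sphH n) (k * ‖x‖)) 0 := by
    have hdH : HasDerivAt (sphH n) (deriv (sphH n) (k * ‖x‖)) (k * ‖x + (0:ℝ) • ee i‖) := by
      rw [h0]
      exact (differentiableAt_sphH n hn (by positivity)).hasDerivAt
    exact HasDerivAt.scomp (h := fun s : ℝ => k * ‖x + s • ee i‖) (x := 0) hdH hin
  -- derivative of s ↦ (‖x+s e‖^n)⁻¹ (real)
  have hginv : HasDerivAt (fun u : ℝ => (u ^ n)⁻¹)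
      (-((n : ℝ) * ‖x‖ ^ (n - 1)) / (‖x‖ ^ n) ^ 2) ‖x‖ :=
    (hasDerivAt_pow n ‖x‖).inv (by positivity)
  have hginv' : HasDerivAt (fun u : ℝ => (u ^ n)⁻¹)
      (-((n : ℝ) * ‖x‖ ^ (n - 1)) / (‖x‖ ^ n) ^ 2) ‖x + (0:ℝ) • ee i‖ := by
    rw [h0]; exact hginv
  have hinv : HasDerivAt (fun s : ℝ => ((‖x + s • ee i‖ ^ n)⁻¹ : ℝ))
      (-((n : ℝ) * ‖x‖ ^ (n - 1)) / (‖x‖ ^ n) ^ 2 * (x i / ‖x‖)) 0 :=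
    HasDerivAt.comp (h := fun s : ℝ => ‖x + s • ee i‖) (x := 0) hginv' hnl
  have hkey : -((n : ℝ) * ‖x‖ ^ (n - 1)) / (‖x‖ ^ n) ^ 2 * (x i / ‖x‖)
      = -((n : ℝ) * x i) * ((‖x‖ ^ n)⁻¹ * (‖x‖⁻¹) ^ 2) := by
    rw [show (‖x‖:ℝ) ^ n = ‖x‖ ^ (n-1) * ‖x‖ by
      conv_lhs => rw [show n = (n - 1) + 1 by omega]
      rw [pow_succ]]
    field_simp
  rw [hkey] at hinv
  have hinvC := hinv.ofReal_comp
  -- scalar part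
  have hS := (hHc.neg).mul hinvC
  -- coordinate parts
  have hco : ∀ c : Fin 3, HasDerivAt (fun s : ℝ => (((x + s • ee i) c : ℝ) : ℂ))
      ((if c = i then (1:ℂ) else 0)) 0 := by
    intro c
    have hfun : (fun s : ℝ => ((x + s • ee i) c : ℝ)) =
        fun s : ℝ => x c + s * (if c = i then (1:ℝ) else 0) := by
      funext s
      simp [ee, EuclideanSpace.single_apply]
    have hre : HasDerivAt (fun s : ℝ => x c + s * (if c = i then (1:ℝ) else 0))
        ((if c = i then (1:ℝ) else 0)) 0 := by
      simpa using ((hasDerivAt_id (0:ℝ)).mul_const ((if c = i then (1:ℝ) else 0))).const_add (x c)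
    have := (hfun ▸ hre).ofReal_comp
    convert this using 1
    split <;> simp
  -- Dv along the line
  have hDl : ∀ c : Fin 3, HasDerivAt (fun s : ℝ => Dv Y c (x + s • ee i)) (Hm Y i c x) 0 := by
    intro c
    have h2 := hasDerivAt_line (g := Dv Y c) (x := x) (v := ee i) (s₀ := 0)
      (by rw [h0]; exact hDd c x)
    rw [h0] at h2
    exact h2
  -- W part
  have hW := ((hco a).mul (hDl b)).sub ((hco b).mul (hDl a))
  -- product
  have hT := hS.mul hW
  have hpd := hT.deriv
  have hshow : pd i (fun y => -(sphH n (k * ‖y‖)) * ((((‖y‖ ^ n)⁻¹ : ℝ)) : ℂ) *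
      ((y a : ℂ) * Dv Y b y - (y b : ℂ) * Dv Y a y)) x
      = deriv (fun s : ℝ =>
          (fun s : ℝ => -(sphH n (k * ‖x + s • ee i‖)) * ((((‖x + s • ee i‖ ^ n)⁻¹ : ℝ)) : ℂ)) s *
          (fun s : ℝ => (((x + s • ee i) a : ℝ) : ℂ) * Dv Y b (x + s • ee i)
            - (((x + s • ee i) b : ℝ) : ℂ) * Dv Y a (x + s • ee i)) s) 0 := rfl
  rw [hshow]; refine hpd.trans ?_; simp only [Pi.neg_apply, Pi.mul_apply, Pi.sub_apply]
  simp only [h0]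
  have hpow : ((‖x‖ : ℝ) : ℂ) ^ n = ((‖x‖ : ℝ) : ℂ) ^ (n - 1) * ((‖x‖ : ℝ) : ℂ) := by
    conv_lhs => rw [show n = (n - 1) + 1 by omega]
    rw [pow_succ]
  have hrC : ((‖x‖ : ℝ) : ℂ) ≠ 0 := by exact_mod_cast hr.ne'
  have hrC1 : ((‖x‖ : ℝ) : ℂ) ^ (n-1) ≠ 0 := pow_ne_zero _ hrC
  rw [Complex.real_smul]
  push_cast
  ring

lemma pd_congr {F G : E3 → ℂ} {x : E3} (hx : x ≠ 0)
    (h : ∀ y : E3, y ≠ 0 → F y = G y) (i : Fin 3) : pd i F x = pd i G x := by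
  have hcont : Continuous (fun s : ℝ => x + s • EuclideanSpace.single i (1:ℝ)) := by
    continuity
  have h0 : (fun s : ℝ => x + s • EuclideanSpace.single i (1:ℝ)) 0 ≠ 0 := by simpa using hx
  have hev : ∀ᶠ s in 𝓝 (0:ℝ), x + s • EuclideanSpace.single i (1:ℝ) ≠ 0 :=
    hcont.continuousAt.eventually_ne h0
  have heq : (fun s : ℝ => F (x + s • EuclideanSpace.single i (1:ℝ)))
      =ᶠ[𝓝 (0:ℝ)] (fun s : ℝ => G (x + s • EuclideanSpace.single i (1:ℝ))) := by
    filter_upwards [hev] with s hs using h _ hs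
  exact heq.deriv_eq

set_option maxHeartbeats 1000000 in
lemma ETE_eq (n : ℕ) (hn : 1 ≤ n) (k : ℝ) {Y : E3 → ℂ} (hY : ContDiff ℝ (⊤ : ℕ∞) Y)
    (hYhom : ∀ c : ℝ, 0 < c → ∀ x : E3, Y (c • x) = (c : ℂ) ^ n * Y x)
    {y : E3} (hy : y ≠ 0) (j a b : Fin 3)
    (hj : ∀ u v : Fin 3 → ℂ, crossProduct u v j = u a * v b - u b * v a) :
    ETE n Y k y j = -(sphH n (k * ‖y‖)) * ((((‖y‖ ^ n)⁻¹ : ℝ)) : ℂ) *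
      ((y a : ℂ) * Dv Y b y - (y b : ℂ) * Dv Y a y) := by
  have hr : (0:ℝ) < ‖y‖ := norm_pos_iff.2 hy
  have hrC : ((‖y‖ : ℝ) : ℂ) ≠ 0 := by exact_mod_cast hr.ne'
  have hq0 : ((Real.sqrt ((n : ℝ) * ((n : ℝ) + 1)) : ℝ) : ℂ) ≠ 0 := by
    have : (0:ℝ) < Real.sqrt ((n : ℝ) * ((n : ℝ) + 1)) := by
      apply Real.sqrt_pos.2
      have : (1:ℝ) ≤ (n:ℝ) := by exact_mod_cast hn
      nlinarith
    exact_mod_cast this.ne'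
  have hYd : Differentiable ℝ Y := hY.differentiable (by simp)
  have hDhat : ∀ c : Fin 3, pd c Y (‖y‖⁻¹ • y) = ((((‖y‖:ℝ):ℂ))⁻¹) ^ (n-1) * Dv Y c y := by
    intro c
    rw [pd_eq (hYd _) c]
    have := Dv_hom hn hY hYhom c (‖y‖⁻¹) (by positivity) y
    rw [show Dv Y c (‖y‖⁻¹ • y) = fderiv ℝ Y (‖y‖⁻¹ • y) (ee c) from rfl] at this
    rw [this]
    push_cast
    ring
  have hxhat : ∀ c : Fin 3, (((‖y‖⁻¹ • y) c : ℝ) : ℂ) = (((‖y‖:ℝ):ℂ))⁻¹ * (y c : ℂ) := by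
    intro c
    have : ((‖y‖⁻¹ • y) c : ℝ) = ‖y‖⁻¹ * y c := by
      simp [PiLp.smul_apply, smul_eq_mul]
    rw [this]
    push_cast
    ring
  have hpinv : ((((‖y‖:ℝ):ℂ))⁻¹) ^ (n-1) * (((‖y‖:ℝ):ℂ))⁻¹ = ((((‖y‖ ^ n)⁻¹ : ℝ)) : ℂ) := by
    push_cast
    rw [← pow_succ, show n-1+1 = n by omega, inv_pow]
  rw [ETE, vshV]
  rw [hj]
  simp only [vshU, toC, surfGradC, Fin.sum_univ_three]
  rw [hDhat 0, hDhat 1, hDhat 2, hxhat a, hxhat b, hxhat 0, hxhat 1, hxhat 2]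
  rw [hDhat a, hDhat b]
  rw [← hpinv]
  have hqq : ((Real.sqrt ((n : ℝ) * ((n : ℝ) + 1)) : ℝ) : ℂ) *
      (((Real.sqrt ((n : ℝ) * ((n : ℝ) + 1)) : ℝ) : ℂ))⁻¹ = 1 := mul_inv_cancel₀ hq0
  linear_combination (-(sphH n (k * ‖y‖)) * ((((‖y‖:ℝ):ℂ))⁻¹) ^ (n-1) * (((‖y‖:ℝ):ℂ))⁻¹ *
    ((y a : ℂ) * Dv Y b y - (y b : ℂ) * Dv Y a y)) * hqq

set_option maxHeartbeats 4000000 in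
/-- Explicit formula for the curl of the TE multipole:
`∇×E^{TE}_{n,m}(k;x) = (√(n(n+1))/|x|) ℋ_n(k|x|) U_{n,m}(x̂)
  + (n(n+1)/|x|) h_n^{(1)}(k|x|) Y_n^m(x̂) x̂`. -/
theorem curl_TE_multipole (k : ℝ) (hk : 0 < k) (n : ℕ) (hn : 1 ≤ n)
    (Y : E3 → ℂ) (hYsmooth : ContDiff ℝ (⊤ : ℕ∞) Y) (hYharm : ∀ x, lap Y x = 0)
    (hYhom : ∀ c : ℝ, 0 < c → ∀ x : E3, Y (c • x) = (c : ℂ) ^ n * Y x) :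
    ∀ x : E3, x ≠ 0 → ∀ i : Fin 3,
      curl (ETE n Y k) x i =
        ((Real.sqrt ((n : ℝ) * ((n : ℝ) + 1)) : ℂ) / (‖x‖ : ℂ)) * calH n (k * ‖x‖) *
            vshU n Y (‖x‖⁻¹ • x) i +
          ((((n : ℝ) * ((n : ℝ) + 1) : ℝ) : ℂ) / (‖x‖ : ℂ)) * sphH n (k * ‖x‖) *
            Y (‖x‖⁻¹ • x) * ((‖x‖⁻¹ • x) i : ℂ) := by
  intro x hx i
  have hr : (0:ℝ) < ‖x‖ := norm_pos_iff.2 hx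
  have hrC : ((‖x‖ : ℝ) : ℂ) ≠ 0 := by exact_mod_cast hr.ne'
  have hYd : Differentiable ℝ Y := hYsmooth.differentiable (by simp)
  have hDd : ∀ j, Differentiable ℝ (Dv Y j) := fun j =>
    (contDiff_Dv hYsmooth j).differentiable (by simp)
  have hj0 : ∀ u v : Fin 3 → ℂ, crossProduct u v 0 = u 1 * v 2 - u 2 * v 1 := by
    intro u v; simp [cross_apply]
  have hj1 : ∀ u v : Fin 3 → ℂ, crossProduct u v 1 = u 2 * v 0 - u 0 * v 2 := by
    intro u v; simp [cross_apply]
  have hj2 : ∀ u v : Fin 3 → ℂ, crossProduct u v 2 = u 0 * v 1 - u 1 * v 0 := by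
    intro u v; simp [cross_apply]
  -- Euler identity for Y
  have hE1 : (x 0 : ℂ) * Dv Y 0 x + (x 1 : ℂ) * Dv Y 1 x + (x 2 : ℂ) * Dv Y 2 x
      = (n : ℂ) * Y x := by
    have h1 := euler_hom hYhom x (hYd x)
    have h2 := apply_sum (fderiv ℝ Y x) x
    rw [h2, Fin.sum_univ_three] at h1
    exact h1
  -- Euler identity for the partial derivatives
  have hE2 : ∀ c : Fin 3, (x 0 : ℂ) * Hm Y 0 c x + (x 1 : ℂ) * Hm Y 1 c x
      + (x 2 : ℂ) * Hm Y 2 c x = ((n : ℂ) - 1) * Dv Y c x := by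
    intro c
    have h1 := euler_hom (f := Dv Y c) (m := n - 1)
      (fun cc hcc y => Dv_hom hn hYsmooth hYhom c cc hcc y) x (hDd c x)
    have h2 := apply_sum (fderiv ℝ (Dv Y c) x) x
    rw [h2, Fin.sum_univ_three] at h1
    have h3 : (((n - 1 : ℕ) : ℝ) : ℂ) = (n : ℂ) - 1 := by
      push_cast [Nat.cast_sub hn]
      simp
    rw [← h3]
    exact_mod_cast h1
  have hT3 : Hm Y 0 0 x + Hm Y 1 1 x + Hm Y 2 2 x = 0 := by
    have := traceH hYsmooth hYharm x
    rwa [Fin.sum_univ_three] at this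
  have hN : (x 0 : ℂ)^2 + (x 1 : ℂ)^2 + (x 2 : ℂ)^2 = ((‖x‖ : ℝ) : ℂ)^2 := by
    exact_mod_cast congrArg (fun t : ℝ => (t : ℂ)) (norm_sq_eq3 x)
  have hRu : ((‖x‖ : ℝ) : ℂ) * (((‖x‖ : ℝ) : ℂ))⁻¹ = 1 := mul_inv_cancel₀ hrC
  have hq0 : ((Real.sqrt ((n : ℝ) * ((n : ℝ) + 1)) : ℝ) : ℂ) ≠ 0 := by
    have : (0:ℝ) < Real.sqrt ((n : ℝ) * ((n : ℝ) + 1)) := by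
      apply Real.sqrt_pos.2
      have : (1:ℝ) ≤ (n:ℝ) := by exact_mod_cast hn
      nlinarith
    exact_mod_cast this.ne'
  have hqq : ((Real.sqrt ((n : ℝ) * ((n : ℝ) + 1)) : ℝ) : ℂ) *
      (((Real.sqrt ((n : ℝ) * ((n : ℝ) + 1)) : ℝ) : ℂ))⁻¹ = 1 := mul_inv_cancel₀ hq0
  -- values at x̂
  have hDhat : ∀ c : Fin 3, pd c Y (‖x‖⁻¹ • x)
      = ((((‖x‖:ℝ):ℂ))⁻¹) ^ (n-1) * Dv Y c x := by
    intro c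
    rw [pd_eq (hYd _) c]
    have := Dv_hom hn hYsmooth hYhom c (‖x‖⁻¹) (by positivity) x
    rw [show Dv Y c (‖x‖⁻¹ • x) = fderiv ℝ Y (‖x‖⁻¹ • x) (ee c) from rfl] at this
    rw [this]
    push_cast
    ring
  have hxhat : ∀ c : Fin 3, (((‖x‖⁻¹ • x) c : ℝ) : ℂ) = (((‖x‖:ℝ):ℂ))⁻¹ * (x c : ℂ) := by
    intro c
    have : ((‖x‖⁻¹ • x) c : ℝ) = ‖x‖⁻¹ * x c := by
      simp [PiLp.smul_apply, smul_eq_mul]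
    rw [this]; push_cast; ring
  have hYhat : Y (‖x‖⁻¹ • x) = ((((‖x‖:ℝ):ℂ))⁻¹) ^ n * Y x := by
    rw [hYhom (‖x‖⁻¹) (by positivity) x]
    push_cast
    ring
  have hPn : ((((‖x‖:ℝ):ℂ)) ^ n)⁻¹ = ((((‖x‖:ℝ):ℂ))⁻¹) ^ (n-1) * (((‖x‖:ℝ):ℂ))⁻¹ := by
    rw [← inv_pow]
    conv_lhs => rw [show n = (n-1)+1 by omega, pow_succ]
  have hun : ((((‖x‖:ℝ):ℂ))⁻¹) ^ n = ((((‖x‖:ℝ):ℂ))⁻¹) ^ (n-1) * (((‖x‖:ℝ):ℂ))⁻¹ := by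
    conv_lhs => rw [show n = (n-1)+1 by omega, pow_succ]
  have hcal : calH n (k * ‖x‖) = sphH n (k * ‖x‖)
      + (k : ℂ) * ((‖x‖:ℝ):ℂ) * deriv (sphH n) (k * ‖x‖) := by
    rw [calH]; push_cast; ring
  fin_cases i
  · show curl (ETE n Y k) x 0 = ((Real.sqrt ((n : ℝ) * ((n : ℝ) + 1)) : ℂ) / (‖x‖ : ℂ)) * calH n (k * ‖x‖) *
            vshU n Y (‖x‖⁻¹ • x) 0 +
          ((((n : ℝ) * ((n : ℝ) + 1) : ℝ) : ℂ) / (‖x‖ : ℂ)) * sphH n (k * ‖x‖) *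
            Y (‖x‖⁻¹ • x) * ((‖x‖⁻¹ • x) 0 : ℂ)
    have hc : curl (ETE n Y k) x 0
        = pd 1 (fun y => ETE n Y k y 2) x - pd 2 (fun y => ETE n Y k y 1) x := by
      simp [curl]
    rw [hc]
    rw [pd_congr hx (fun y hy => ETE_eq n hn k hYsmooth hYhom hy 2 0 1 hj2) 1]
    rw [pd_congr hx (fun y hy => ETE_eq n hn k hYsmooth hYhom hy 1 2 0 hj1) 2]
    rw [pd_A n hn k hk hYsmooth hx 1 0 1, pd_A n hn k hk hYsmooth hx 2 2 0]
    simp only [vshU, surfGradC, Fin.sum_univ_three]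
    rw [hDhat 0, hDhat 1, hDhat 2, hxhat 0, hxhat 1, hxhat 2, hYhat, hcal]
    rw [hPn, hun]
    push_cast
    linear_combination (norm := ring_nf) ((((n:ℂ) * sphH n (k * ‖x‖) * (((‖x‖:ℝ):ℂ))⁻¹ - ((k:ℝ):ℂ) * deriv (sphH n) (k * ‖x‖)) * (((((‖x‖:ℝ):ℂ))⁻¹ ^ (n-1)) * (((‖x‖:ℝ):ℂ))⁻¹) * (((‖x‖:ℝ):ℂ))⁻¹ * ((x 0 : ℝ):ℂ)) + ((sphH n (k * ‖x‖) + ((k:ℝ):ℂ) * ((‖x‖:ℝ):ℂ) * deriv (sphH n) (k * ‖x‖)) * (((((‖x‖:ℝ):ℂ))⁻¹ ^ (n-1)) * (((‖x‖:ℝ):ℂ))⁻¹) * ((‖x‖:ℝ):ℂ) * (((‖x‖:ℝ):ℂ))⁻¹^3 * ((x 0 : ℝ):ℂ))) * hE1 + (-(((n:ℂ) * sphH n (k * ‖x‖) * (((‖x‖:ℝ):ℂ))⁻¹ - ((k:ℝ):ℂ) * deriv (sphH n) (k * ‖x‖)) * (((((‖x‖:ℝ):ℂ))⁻¹ ^ (n-1))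 * (((‖x‖:ℝ):ℂ))⁻¹) * (((‖x‖:ℝ):ℂ))⁻¹ * Dv Y 0 x)) * hN + ((-(sphH n (k * ‖x‖)) * (((((‖x‖:ℝ):ℂ))⁻¹ ^ (n-1)) * (((‖x‖:ℝ):ℂ))⁻¹)) * ((x 0 : ℝ):ℂ)) * hT3 + (-(-(sphH n (k * ‖x‖)) * (((((‖x‖:ℝ):ℂ))⁻¹ ^ (n-1)) * (((‖x‖:ℝ):ℂ))⁻¹))) * hE2 0 + ((((((‖x‖:ℝ):ℂ))⁻¹ ^ (n-1)) * (((‖x‖:ℝ):ℂ))⁻¹) * (Y x * ((x 0 : ℝ):ℂ) * (n:ℂ) * (sphH n (k * ‖x‖) * (((‖x‖:ℝ):ℂ))⁻¹^2 + ((k:ℝ):ℂ) * deriv (sphH n) (k * ‖x‖) * (((‖x‖:ℝ):ℂ))⁻¹ * ((((‖x‖:ℝ):ℂ))⁻¹ * ((‖x‖:ℝ):ℂ) + 1)) + Dv Y 0 x * sphH n (k * ‖x‖) * ((n:ℂ) * (1 + (((‖x‖:ℝ):ℂ))⁻¹ * ((‖x‖:ℝ):ℂ)) + 1)) + ((k:ℝ):ℂ)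 * deriv (sphH n) (k * ‖x‖) * (((‖x‖:ℝ):ℂ))⁻¹ * ((((‖x‖:ℝ):ℂ))⁻¹ ^ (n-1)) * ((‖x‖:ℝ):ℂ) * Dv Y 0 x - ((k:ℝ):ℂ) * deriv (sphH n) (k * ‖x‖) * (((‖x‖:ℝ):ℂ))⁻¹^3 * ((((‖x‖:ℝ):ℂ))⁻¹ ^ (n-1)) * ((‖x‖:ℝ):ℂ) * ((x 0 : ℝ):ℂ) * (((x 0 : ℝ):ℂ) * Dv Y 0 x + ((x 1 : ℝ):ℂ) * Dv Y 1 x + ((x 2 : ℝ):ℂ) * Dv Y 2 x) - sphH n (k * ‖x‖) * (((‖x‖:ℝ):ℂ))⁻¹ * ((((‖x‖:ℝ):ℂ))⁻¹ ^ (n-1)) * Dv Y 0 x - sphH n (k * ‖x‖) * (((‖x‖:ℝ):ℂ))⁻¹^3 * ((((‖x‖:ℝ):ℂ))⁻¹ ^ (n-1)) * ((x 0 : ℝ):ℂ) * (((x 0 : ℝ):ℂ) * Dv Y 0 x + ((x 1 : ℝ):ℂ) * Dv Y 1 x + ((x 2 : ℝ):ℂ) * Dv Y 2 x) - 2 * (n:ℂ)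 * sphH n (k * ‖x‖) * (((‖x‖:ℝ):ℂ))⁻¹ * ((((‖x‖:ℝ):ℂ))⁻¹ ^ (n-1)) * Dv Y 0 x * ((((‖x‖:ℝ):ℂ))⁻¹ * ((‖x‖:ℝ):ℂ) + 1)) * hRu + (-((((‖x‖:ℝ):ℂ))⁻¹ * (sphH n (k * ‖x‖) + ((k:ℝ):ℂ) * ((‖x‖:ℝ):ℂ) * deriv (sphH n) (k * ‖x‖)) * (((((‖x‖:ℝ):ℂ))⁻¹ ^ (n-1)) * Dv Y 0 x - (((((‖x‖:ℝ):ℂ))⁻¹ ^ (n-1)) * Dv Y 0 x * (((‖x‖:ℝ):ℂ))⁻¹ * ((x 0 : ℝ):ℂ) + ((((‖x‖:ℝ):ℂ))⁻¹ ^ (n-1)) * Dv Y 1 x * (((‖x‖:ℝ):ℂ))⁻¹ * ((x 1 : ℝ):ℂ) + ((((‖x‖:ℝ):ℂ))⁻¹ ^ (n-1)) * Dv Y 2 x * (((‖x‖:ℝ):ℂ))⁻¹ * ((x 2 : ℝ):ℂ)) * ((((‖x‖:ℝ):ℂ))⁻¹ * ((x 0 : ℝ):ℂ))))) * hqq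
  · show curl (ETE n Y k) x 1 = ((Real.sqrt ((n : ℝ) * ((n : ℝ) + 1)) : ℂ) / (‖x‖ : ℂ)) * calH n (k * ‖x‖) *
            vshU n Y (‖x‖⁻¹ • x) 1 +
          ((((n : ℝ) * ((n : ℝ) + 1) : ℝ) : ℂ) / (‖x‖ : ℂ)) * sphH n (k * ‖x‖) *
            Y (‖x‖⁻¹ • x) * ((‖x‖⁻¹ • x) 1 : ℂ)
    have hc : curl (ETE n Y k) x 1
        = pd 2 (fun y => ETE n Y k y 0) x - pd 0 (fun y => ETE n Y k y 2) x := by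
      simp [curl]
    rw [hc]
    rw [pd_congr hx (fun y hy => ETE_eq n hn k hYsmooth hYhom hy 0 1 2 hj0) 2]
    rw [pd_congr hx (fun y hy => ETE_eq n hn k hYsmooth hYhom hy 2 0 1 hj2) 0]
    rw [pd_A n hn k hk hYsmooth hx 2 1 2, pd_A n hn k hk hYsmooth hx 0 0 1]
    simp only [vshU, surfGradC, Fin.sum_univ_three]
    rw [hDhat 0, hDhat 1, hDhat 2, hxhat 0, hxhat 1, hxhat 2, hYhat, hcal]
    rw [hPn, hun]
    push_cast
    linear_combination (norm := ring_nf) ((((n:ℂ) * sphH n (k * ‖x‖) * (((‖x‖:ℝ):ℂ))⁻¹ - ((k:ℝ):ℂ) * deriv (sphH n) (k * ‖x‖)) * (((((‖x‖:ℝ):ℂ))⁻¹ ^ (n-1)) * (((‖x‖:ℝ):ℂ))⁻¹) * (((‖x‖:ℝ):ℂ))⁻¹ * ((x 1 : ℝ):ℂ)) + ((sphH n (k * ‖x‖) + ((k:ℝ):ℂ) * ((‖x‖:ℝ):ℂ) * deriv (sphH n) (k * ‖x‖)) * (((((‖x‖:ℝ):ℂ))⁻¹ ^ (n-1)) * (((‖x‖:ℝ):ℂ))⁻¹)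 * ((‖x‖:ℝ):ℂ) * (((‖x‖:ℝ):ℂ))⁻¹^3 * ((x 1 : ℝ):ℂ))) * hE1 + (-(((n:ℂ) * sphH n (k * ‖x‖) * (((‖x‖:ℝ):ℂ))⁻¹ - ((k:ℝ):ℂ) * deriv (sphH n) (k * ‖x‖)) * (((((‖x‖:ℝ):ℂ))⁻¹ ^ (n-1)) * (((‖x‖:ℝ):ℂ))⁻¹) * (((‖x‖:ℝ):ℂ))⁻¹ * Dv Y 1 x)) * hN + ((-(sphH n (k * ‖x‖)) * (((((‖x‖:ℝ):ℂ))⁻¹ ^ (n-1)) * (((‖x‖:ℝ):ℂ))⁻¹)) * ((x 1 : ℝ):ℂ)) * hT3 + (-(-(sphH n (k * ‖x‖)) * (((((‖x‖:ℝ):ℂ))⁻¹ ^ (n-1)) * (((‖x‖:ℝ):ℂ))⁻¹))) * hE2 1 + ((((((‖x‖:ℝ):ℂ))⁻¹ ^ (n-1)) * (((‖x‖:ℝ):ℂ))⁻¹) * (Y x * ((x 1 : ℝ):ℂ) * (n:ℂ) * (sphH n (k * ‖x‖) * (((‖x‖:ℝ):ℂ))⁻¹^2 + ((k:ℝ):ℂ)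 * deriv (sphH n) (k * ‖x‖) * (((‖x‖:ℝ):ℂ))⁻¹ * ((((‖x‖:ℝ):ℂ))⁻¹ * ((‖x‖:ℝ):ℂ) + 1)) + Dv Y 1 x * sphH n (k * ‖x‖) * ((n:ℂ) * (1 + (((‖x‖:ℝ):ℂ))⁻¹ * ((‖x‖:ℝ):ℂ)) + 1)) + ((k:ℝ):ℂ) * deriv (sphH n) (k * ‖x‖) * (((‖x‖:ℝ):ℂ))⁻¹ * ((((‖x‖:ℝ):ℂ))⁻¹ ^ (n-1)) * ((‖x‖:ℝ):ℂ) * Dv Y 1 x - ((k:ℝ):ℂ) * deriv (sphH n) (k * ‖x‖) * (((‖x‖:ℝ):ℂ))⁻¹^3 * ((((‖x‖:ℝ):ℂ))⁻¹ ^ (n-1)) * ((‖x‖:ℝ):ℂ) * ((x 1 : ℝ):ℂ) * (((x 0 : ℝ):ℂ) * Dv Y 0 x + ((x 1 : ℝ):ℂ) * Dv Y 1 x + ((x 2 : ℝ):ℂ) * Dv Y 2 x) - sphH n (k * ‖x‖) * (((‖x‖:ℝ):ℂ))⁻¹ * ((((‖x‖:ℝ):ℂ))⁻¹ ^ (n-1))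 * Dv Y 1 x - sphH n (k * ‖x‖) * (((‖x‖:ℝ):ℂ))⁻¹^3 * ((((‖x‖:ℝ):ℂ))⁻¹ ^ (n-1)) * ((x 1 : ℝ):ℂ) * (((x 0 : ℝ):ℂ) * Dv Y 0 x + ((x 1 : ℝ):ℂ) * Dv Y 1 x + ((x 2 : ℝ):ℂ) * Dv Y 2 x) - 2 * (n:ℂ) * sphH n (k * ‖x‖) * (((‖x‖:ℝ):ℂ))⁻¹ * ((((‖x‖:ℝ):ℂ))⁻¹ ^ (n-1)) * Dv Y 1 x * ((((‖x‖:ℝ):ℂ))⁻¹ * ((‖x‖:ℝ):ℂ) + 1)) * hRu + (-((((‖x‖:ℝ):ℂ))⁻¹ * (sphH n (k * ‖x‖) + ((k:ℝ):ℂ) * ((‖x‖:ℝ):ℂ) * deriv (sphH n) (k * ‖x‖)) * (((((‖x‖:ℝ):ℂ))⁻¹ ^ (n-1)) * Dv Y 1 x - (((((‖x‖:ℝ):ℂ))⁻¹ ^ (n-1)) * Dv Y 0 x * (((‖x‖:ℝ):ℂ))⁻¹ * ((x 0 : ℝ):ℂ) + ((((‖x‖:ℝ):ℂ))⁻¹ ^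 (n-1)) * Dv Y 1 x * (((‖x‖:ℝ):ℂ))⁻¹ * ((x 1 : ℝ):ℂ) + ((((‖x‖:ℝ):ℂ))⁻¹ ^ (n-1)) * Dv Y 2 x * (((‖x‖:ℝ):ℂ))⁻¹ * ((x 2 : ℝ):ℂ)) * ((((‖x‖:ℝ):ℂ))⁻¹ * ((x 1 : ℝ):ℂ))))) * hqq
  · show curl (ETE n Y k) x 2 = ((Real.sqrt ((n : ℝ) * ((n : ℝ) + 1)) : ℂ) / (‖x‖ : ℂ)) * calH n (k * ‖x‖) *
            vshU n Y (‖x‖⁻¹ • x) 2 +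
          ((((n : ℝ) * ((n : ℝ) + 1) : ℝ) : ℂ) / (‖x‖ : ℂ)) * sphH n (k * ‖x‖) *
            Y (‖x‖⁻¹ • x) * ((‖x‖⁻¹ • x) 2 : ℂ)
    have hc : curl (ETE n Y k) x 2
        = pd 0 (fun y => ETE n Y k y 1) x - pd 1 (fun y => ETE n Y k y 0) x := by
      simp [curl]
    rw [hc]
    rw [pd_congr hx (fun y hy => ETE_eq n hn k hYsmooth hYhom hy 1 2 0 hj1) 0]
    rw [pd_congr hx (fun y hy => ETE_eq n hn k hYsmooth hYhom hy 0 1 2 hj0) 1]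
    rw [pd_A n hn k hk hYsmooth hx 0 2 0, pd_A n hn k hk hYsmooth hx 1 1 2]
    simp only [vshU, surfGradC, Fin.sum_univ_three]
    rw [hDhat 0, hDhat 1, hDhat 2, hxhat 0, hxhat 1, hxhat 2, hYhat, hcal]
    rw [hPn, hun]
    push_cast
    linear_combination (norm := ring_nf) ((((n:ℂ) * sphH n (k * ‖x‖) * (((‖x‖:ℝ):ℂ))⁻¹ - ((k:ℝ):ℂ) * deriv (sphH n) (k * ‖x‖)) * (((((‖x‖:ℝ):ℂ))⁻¹ ^ (n-1)) * (((‖x‖:ℝ):ℂ))⁻¹) * (((‖x‖:ℝ):ℂ))⁻¹ * ((x 2 : ℝ):ℂ)) + ((sphH n (k * ‖x‖) + ((k:ℝ):ℂ) * ((‖x‖:ℝ):ℂ) * deriv (sphH n) (k * ‖x‖)) * (((((‖x‖:ℝ):ℂ))⁻¹ ^ (n-1)) * (((‖x‖:ℝ):ℂ))⁻¹) * ((‖x‖:ℝ):ℂ) * (((‖x‖:ℝ):ℂ))⁻¹^3 * ((x 2 : ℝ):ℂ))) * hE1 + (-(((n:ℂ) * sphH n (k * ‖x‖) * (((‖x‖:ℝ):ℂ))⁻¹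 - ((k:ℝ):ℂ) * deriv (sphH n) (k * ‖x‖)) * (((((‖x‖:ℝ):ℂ))⁻¹ ^ (n-1)) * (((‖x‖:ℝ):ℂ))⁻¹) * (((‖x‖:ℝ):ℂ))⁻¹ * Dv Y 2 x)) * hN + ((-(sphH n (k * ‖x‖)) * (((((‖x‖:ℝ):ℂ))⁻¹ ^ (n-1)) * (((‖x‖:ℝ):ℂ))⁻¹)) * ((x 2 : ℝ):ℂ)) * hT3 + (-(-(sphH n (k * ‖x‖)) * (((((‖x‖:ℝ):ℂ))⁻¹ ^ (n-1)) * (((‖x‖:ℝ):ℂ))⁻¹))) * hE2 2 + ((((((‖x‖:ℝ):ℂ))⁻¹ ^ (n-1)) * (((‖x‖:ℝ):ℂ))⁻¹) * (Y x * ((x 2 : ℝ):ℂ) * (n:ℂ) * (sphH n (k * ‖x‖) * (((‖x‖:ℝ):ℂ))⁻¹^2 + ((k:ℝ):ℂ) * deriv (sphH n) (k * ‖x‖) * (((‖x‖:ℝ):ℂ))⁻¹ * ((((‖x‖:ℝ):ℂ))⁻¹ * ((‖x‖:ℝ):ℂ) + 1)) + Dv Y 2 x * sphH n (k * ‖x‖)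 * ((n:ℂ) * (1 + (((‖x‖:ℝ):ℂ))⁻¹ * ((‖x‖:ℝ):ℂ)) + 1)) + ((k:ℝ):ℂ) * deriv (sphH n) (k * ‖x‖) * (((‖x‖:ℝ):ℂ))⁻¹ * ((((‖x‖:ℝ):ℂ))⁻¹ ^ (n-1)) * ((‖x‖:ℝ):ℂ) * Dv Y 2 x - ((k:ℝ):ℂ) * deriv (sphH n) (k * ‖x‖) * (((‖x‖:ℝ):ℂ))⁻¹^3 * ((((‖x‖:ℝ):ℂ))⁻¹ ^ (n-1)) * ((‖x‖:ℝ):ℂ) * ((x 2 : ℝ):ℂ) * (((x 0 : ℝ):ℂ) * Dv Y 0 x + ((x 1 : ℝ):ℂ) * Dv Y 1 x + ((x 2 : ℝ):ℂ) * Dv Y 2 x) - sphH n (k * ‖x‖) * (((‖x‖:ℝ):ℂ))⁻¹ * ((((‖x‖:ℝ):ℂ))⁻¹ ^ (n-1)) * Dv Y 2 x - sphH n (k * ‖x‖) * (((‖x‖:ℝ):ℂ))⁻¹^3 * ((((‖x‖:ℝ):ℂ))⁻¹ ^ (n-1)) * ((x 2 : ℝ):ℂ) * (((x 0 : ℝ):ℂ)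 * Dv Y 0 x + ((x 1 : ℝ):ℂ) * Dv Y 1 x + ((x 2 : ℝ):ℂ) * Dv Y 2 x) - 2 * (n:ℂ) * sphH n (k * ‖x‖) * (((‖x‖:ℝ):ℂ))⁻¹ * ((((‖x‖:ℝ):ℂ))⁻¹ ^ (n-1)) * Dv Y 2 x * ((((‖x‖:ℝ):ℂ))⁻¹ * ((‖x‖:ℝ):ℂ) + 1)) * hRu + (-((((‖x‖:ℝ):ℂ))⁻¹ * (sphH n (k * ‖x‖) + ((k:ℝ):ℂ) * ((‖x‖:ℝ):ℂ) * deriv (sphH n) (k * ‖x‖)) * (((((‖x‖:ℝ):ℂ))⁻¹ ^ (n-1)) * Dv Y 2 x - (((((‖x‖:ℝ):ℂ))⁻¹ ^ (n-1)) * Dv Y 0 x * (((‖x‖:ℝ):ℂ))⁻¹ * ((x 0 : ℝ):ℂ) + ((((‖x‖:ℝ):ℂ))⁻¹ ^ (n-1)) * Dv Y 1 x * (((‖x‖:ℝ):ℂ))⁻¹ * ((x 1 : ℝ):ℂ) + ((((‖x‖:ℝ):ℂ))⁻¹ ^ (n-1)) * Dv Y 2 x * (((‖x‖:ℝ):ℂ))⁻¹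 * ((x 2 : ℝ):ℂ)) * ((((‖x‖:ℝ):ℂ))⁻¹ * ((x 2 : ℝ):ℂ))))) * hqq
end
end

section
/- Fix ω > 0 and a bounded domain D with C^{1,α} boundary, and suppose the scattering coefficients satisfy the decay bound |W^{TE,TE}_{(n,m)(p,q)}[ε,μ,ρω]| ≤ C^{n+p} ρ^{n+p+1}/(n^n p^p) for all n,p ≥ 1 and ρ ≤ ρ₀ (and similarly for the TM and mixed coefficients). If moreover W_n^{TE}[μ,ε,ρω] = o(ρ^{2N+1}) and W_n^{TM}[μ,ε,ρω] = o(ρ^{2N+1}) for all 1 ≤ n ≤ N, then the scattering amplitude for plane-wave incidence, whose spherical-harmonic coefficients are α_{n,m} = (4π iⁿ/√(n(n+1)))(V_{n,m}(k̂)·c) W_n^{TE} and β_{n,m} = −(4π iⁿ/√(n(n+1)))(1/(iωμ₀))(U_{n,m}(k̂)·c) W_n^{TM}, satisfies A_∞[μ,ε,ρω](c,k̂;x̂) = o(ρ^{2N+1}) uniformly in (k̂,x̂) for ρ ≤ ρ₀. -/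
open scoped Nat
open Filter Topology

noncomputable section

/-- The far-field (scattering) amplitude of an S-vanishing layered structure:
`A_∞(x̂) = ∑_{n≥1} (-i^{-n} k₀/√(n(n+1))) ∑_{|m|≤n} (α_{n,m} V_{n,m}(x̂) + β_{n,m} √(μ₀/ε₀) U_{n,m}(x̂))`
with `α_{n,m} = (4π iⁿ/√(n(n+1))) (V_{n,m}(k̂)·c) W_n^{TE}[ρ]` and
`β_{n,m} = -(4π iⁿ/√(n(n+1))) (1/(iωμ₀)) (U_{n,m}(k̂)·c) W_n^{TM}[ρ]`. -/
noncomputable def ampl (k₀ ω μ₀ ε₀ : ℝ) (WTE WTM : ℕ → ℝ → ℂ)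
    (U V : ℕ → ℤ → E3 → Fin 3 → ℂ) (ρ : ℝ) (c : Fin 3 → ℂ)
    (khat xhat : E3) (i : Fin 3) : ℂ :=
  ∑' n : ℕ, ∑ m ∈ Finset.Icc (-(n : ℤ)) (n : ℤ),
    (-(Complex.I ^ (-(n : ℤ))) * (k₀ : ℂ) / (Real.sqrt ((n : ℝ) * ((n : ℝ) + 1)) : ℂ)) *
      (((4 * (Real.pi : ℂ) * Complex.I ^ (n : ℕ) / (Real.sqrt ((n : ℝ) * ((n : ℝ) + 1)) : ℂ)) *
          (∑ j : Fin 3, V n m khat j * c j) * WTE n ρ) * V n m xhat i +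
        (-(4 * (Real.pi : ℂ) * Complex.I ^ (n : ℕ) / (Real.sqrt ((n : ℝ) * ((n : ℝ) + 1)) : ℂ)) *
          (1 / (Complex.I * (ω : ℂ) * (μ₀ : ℂ))) *
          (∑ j : Fin 3, U n m khat j * c j) * WTM n ρ) *
          (Real.sqrt (μ₀ / ε₀) : ℂ) * U n m xhat i)

/-!
Uniformly in the directions and the polarisation, the `n`-th term of the far-field series is
bounded by `K n (‖W_n^TE‖ + ‖W_n^TM‖)`. For `n ≤ N` these bounds are `o(ρ^{2N+1})` by the
S-vanishing hypothesis. For all `n` the decay bound dominates the `n`-th term by the geometric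
sequence `2Kρ (Cρ²)ⁿ`, so once `Cρ² ≤ 1/2` the tail beyond `N` is `O(ρ^{2N+3})`.
-/

open Asymptotics Finset Complex

theorem norm_sum_mul_le_card_mul {ι R : Type*} [Fintype ι] [SeminormedRing R] {v c : ι → R} {M : ℝ}
    (hv : ∀ j, ‖v j‖ ≤ M) (hc : ∀ j, ‖c j‖ ≤ 1) :
    ‖∑ j, v j * c j‖ ≤ Fintype.card ι * M := by
  calc ‖∑ j, v j * c j‖ ≤ ∑ _j : ι, M :=
        norm_sum_le_of_le _ fun j _ => (norm_mul_le _ _).trans <|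
          by simpa using mul_le_mul (hv j) (hc j) (norm_nonneg _) ((norm_nonneg _).trans (hv j))
    _ = Fintype.card ι * M := by simp

theorem tsum_le_sum_range_add_geometric {a : ℕ → ℝ} {A q : ℝ} (N : ℕ)
    (ha : ∀ n, 0 ≤ a n) (hle : ∀ n, a n ≤ A * q ^ n) (hq₀ : 0 ≤ q) (hq : q < 1) :
    Summable a ∧ ∑' n, a n ≤ ∑ n ∈ range (N + 1), a n + A * q ^ (N + 1) / (1 - q) := by
  have hgeom := summable_geometric_of_lt_one hq₀ hq
  have hsum : Summable a := (hgeom.mul_left A).of_nonneg_of_le ha hle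
  refine ⟨hsum, ?_⟩
  rw [← hsum.sum_add_tsum_nat_add (N + 1)]
  gcongr
  calc ∑' n, a (n + (N + 1)) ≤ ∑' n, A * q ^ (N + 1) * q ^ n :=
        ((summable_nat_add_iff (N + 1)).2 hsum).tsum_le_tsum
          (fun n => (hle _).trans_eq (by ring)) (hgeom.mul_left _)
    _ = A * q ^ (N + 1) / (1 - q) := by
        rw [tsum_mul_left, tsum_geometric_of_lt_one hq₀ hq, div_eq_mul_inv]

theorem norm_le_geometric_of_decay {E : Type*} [SeminormedAddCommGroup E] {f : ℕ → E}
    {w : ℕ → ℝ} {K C ρ : ℝ} (hK : 0 ≤ K) (hC : 0 ≤ C) (hρ : 0 ≤ ρ) (hf : ∀ n, ‖f n‖ ≤ K * n * w n)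
    (hw : ∀ n, 1 ≤ n → w n ≤ 2 * (C ^ n * ρ ^ (2 * n + 1) / (n : ℝ) ^ (2 * n))) (n : ℕ) :
    ‖f n‖ ≤ 2 * K * ρ * (C * ρ ^ 2) ^ n := by
  rcases n.eq_zero_or_pos with rfl | hn
  · calc ‖f 0‖ ≤ K * (0 : ℕ) * w 0 := hf 0
      _ = 0 := by simp
      _ ≤ _ := by positivity
  have hn₁ : (1 : ℝ) ≤ n := by exact_mod_cast hn
  have hpow : (n : ℝ) / (n : ℝ) ^ (2 * n) ≤ 1 :=
    div_le_one_of_le₀ (le_self_pow₀ hn₁ (by omega)) (by positivity)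
  calc ‖f n‖ ≤ K * n * (2 * (C ^ n * ρ ^ (2 * n + 1) / (n : ℝ) ^ (2 * n))) :=
        (hf n).trans (by gcongr; exact hw n hn)
    _ = 2 * K * ρ * (C * ρ ^ 2) ^ n * ((n : ℝ) / (n : ℝ) ^ (2 * n)) := by
        rw [mul_pow, ← pow_mul]; ring
    _ ≤ 2 * K * ρ * (C * ρ ^ 2) ^ n := mul_le_of_le_one_right (by positivity) hpow

theorem norm_tsum_le_of_decay {E : Type*} [SeminormedAddCommGroup E] {f : ℕ → E}
    {w : ℕ → ℝ} {K C ρ : ℝ} (N : ℕ) (hK : 0 ≤ K) (hC : 0 ≤ C) (hρ : 0 ≤ ρ)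
    (hCρ : C * ρ ^ 2 ≤ 1 / 2) (hf : ∀ n, ‖f n‖ ≤ K * n * w n)
    (hw : ∀ n, 1 ≤ n → w n ≤ 2 * (C ^ n * ρ ^ (2 * n + 1) / (n : ℝ) ^ (2 * n))) :
    ‖∑' n, f n‖ ≤ ∑ n ∈ range (N + 1), K * n * w n + 4 * K * C ^ (N + 1) * ρ ^ (2 * N + 3) := by
  obtain ⟨hsum, htsum⟩ := tsum_le_sum_range_add_geometric N (fun n => norm_nonneg (f n))
    (norm_le_geometric_of_decay hK hC hρ hf hw) (by positivity) (by linarith)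
  calc ‖∑' n, f n‖ ≤ ∑' n, ‖f n‖ := norm_tsum_le_tsum_norm hsum
    _ ≤ _ := htsum
    _ ≤ ∑ n ∈ range (N + 1), K * n * w n + 2 * K * ρ * (C * ρ ^ 2) ^ (N + 1) * 2 := by
        gcongr with n
        · exact hf n
        · rw [div_le_iff₀ (by linarith)]
          have : 0 ≤ 2 * K * ρ * (C * ρ ^ 2) ^ (N + 1) := by positivity
          nlinarith
    _ = _ := by ring

theorem eventually_nhdsGT_iff_exists_Ioc {a : ℝ} {P : ℝ → Prop} :
    (∀ᶠ x in 𝓝[>] a, P x) ↔ ∃ u > a, ∀ x, a < x → x ≤ u → P x := by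
  simp only [Filter.Eventually, mem_nhdsGT_iff_exists_Ioc_subset, Set.subset_def, Set.mem_Ioc,
    Set.mem_Ioi, Set.mem_ofPred_eq, and_imp]

theorem isLittleO_norm_add_norm_of_forall_exists {E F : Type*} [SeminormedAddCommGroup E]
    [SeminormedAddCommGroup F] {u : ℝ → E} {v : ℝ → F} {k : ℕ}
    (h : ∀ ε > (0 : ℝ), ∃ δ > (0 : ℝ), ∀ ρ : ℝ, 0 < ρ → ρ ≤ δ →
      ‖u ρ‖ ≤ ε * ρ ^ k ∧ ‖v ρ‖ ≤ ε * ρ ^ k) :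
    (fun ρ => ‖u ρ‖ + ‖v ρ‖) =o[𝓝[>] 0] fun ρ => ρ ^ k := by
  refine isLittleO_iff.2 fun ε hε => ?_
  obtain ⟨δ, hδ, hδ'⟩ := h (ε / 2) (by positivity)
  filter_upwards [Ioc_mem_nhdsGT hδ] with ρ ⟨hρ, hρδ⟩
  have := hδ' ρ hρ hρδ
  rw [Real.norm_of_nonneg (by positivity), Real.norm_of_nonneg (by positivity)]
  linarith

theorem two_mul_add_one_mul_sq_div_le (n : ℕ) :
    (2 * n + 1 : ℝ) * (n ^ 2 / (n * (n + 1))) ≤ 2 * n := by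
  rcases n.eq_zero_or_pos with rfl | hn
  · simp
  · rw [mul_div_assoc', div_le_iff₀ (by positivity)]
    nlinarith

theorem norm_amplTerm_coeff (k₀ : ℝ) (n : ℕ) :
    ‖(-(I ^ (-(n : ℤ))) * (k₀ : ℂ) / (Real.sqrt ((n : ℝ) * ((n : ℝ) + 1)) : ℂ)) *
      (4 * (Real.pi : ℂ) * I ^ (n : ℕ) / (Real.sqrt ((n : ℝ) * ((n : ℝ) + 1)) : ℂ))‖ =
      4 * Real.pi * ‖(k₀ : ℂ)‖ / (n * (n + 1)) := by
  simp only [norm_mul, norm_div, norm_neg, norm_zpow, norm_pow, norm_I, one_zpow, one_pow,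
    norm_real, Real.norm_eq_abs, abs_of_nonneg (Real.sqrt_nonneg _), Complex.norm_ofNat,
    abs_of_pos Real.pi_pos]
  rw [div_mul_div_comm, Real.mul_self_sqrt (by positivity)]
  ring

def amplTerm (k₀ ω μ₀ ε₀ : ℝ) (WTE WTM : ℕ → ℝ → ℂ)
    (U V : ℕ → ℤ → E3 → Fin 3 → ℂ) (ρ : ℝ) (c : Fin 3 → ℂ)
    (khat xhat : E3) (i : Fin 3) (n : ℕ) : ℂ :=
  ∑ m ∈ Finset.Icc (-(n : ℤ)) (n : ℤ),
    (-(Complex.I ^ (-(n : ℤ))) * (k₀ : ℂ) / (Real.sqrt ((n : ℝ) * ((n : ℝ) + 1)) : ℂ)) *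
      (((4 * (Real.pi : ℂ) * Complex.I ^ (n : ℕ) / (Real.sqrt ((n : ℝ) * ((n : ℝ) + 1)) : ℂ)) *
          (∑ j : Fin 3, V n m khat j * c j) * WTE n ρ) * V n m xhat i +
        (-(4 * (Real.pi : ℂ) * Complex.I ^ (n : ℕ) / (Real.sqrt ((n : ℝ) * ((n : ℝ) + 1)) : ℂ)) *
          (1 / (Complex.I * (ω : ℂ) * (μ₀ : ℂ))) *
          (∑ j : Fin 3, U n m khat j * c j) * WTM n ρ) *
          (Real.sqrt (μ₀ / ε₀) : ℂ) * U n m xhat i)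

theorem ampl_eq_tsum_amplTerm (k₀ ω μ₀ ε₀ : ℝ) (WTE WTM : ℕ → ℝ → ℂ)
    (U V : ℕ → ℤ → E3 → Fin 3 → ℂ) (ρ : ℝ) (c : Fin 3 → ℂ) (khat xhat : E3) (i : Fin 3) :
    ampl k₀ ω μ₀ ε₀ WTE WTM U V ρ c khat xhat i =
      ∑' n, amplTerm k₀ ω μ₀ ε₀ WTE WTM U V ρ c khat xhat i n := rfl

theorem norm_amplTerm_summand_le (k₀ B : ℝ) (n : ℕ) (r : ℂ) {t : ℝ} (ht : 0 ≤ t)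
    {x y v u W W' : ℂ} (hx : ‖x‖ ≤ 3 * (B * n)) (hy : ‖y‖ ≤ 3 * (B * n)) (hv : ‖v‖ ≤ B * n)
    (hu : ‖u‖ ≤ B * n) :
    ‖(-(I ^ (-(n : ℤ))) * (k₀ : ℂ) / (Real.sqrt ((n : ℝ) * ((n : ℝ) + 1)) : ℂ)) *
      ((4 * (Real.pi : ℂ) * I ^ (n : ℕ) / (Real.sqrt ((n : ℝ) * ((n : ℝ) + 1)) : ℂ)) * x * W * v +
        -(4 * (Real.pi : ℂ) * I ^ (n : ℕ) / (Real.sqrt ((n : ℝ) * ((n : ℝ) + 1)) : ℂ)) * r * y *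
          W' * t * u)‖ ≤
      4 * Real.pi * ‖(k₀ : ℂ)‖ / (n * (n + 1)) *
        (3 * B ^ 2 * n ^ 2 * (1 + ‖r‖ * t) * (‖W‖ + ‖W'‖)) := by
  have hprod : ∀ {a b : ℂ}, ‖a‖ ≤ 3 * (B * n) → ‖b‖ ≤ B * n → ‖a * b‖ ≤ 3 * B ^ 2 * n ^ 2 :=
    fun ha hb => (norm_mul_le _ _).trans <|
      (mul_le_mul ha hb (norm_nonneg _) ((norm_nonneg _).trans ha)).trans_eq (by ring)
  rw [← norm_amplTerm_coeff]
  set P := -(I ^ (-(n : ℤ))) * (k₀ : ℂ) / (Real.sqrt ((n : ℝ) * ((n : ℝ) + 1)) : ℂ)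
  set Q := 4 * (Real.pi : ℂ) * I ^ (n : ℕ) / (Real.sqrt ((n : ℝ) * ((n : ℝ) + 1)) : ℂ)
  rw [show P * (Q * x * W * v + -Q * r * y * W' * t * u) =
      P * Q * (x * v * W - r * t * (y * u) * W') by ring, norm_mul]
  gcongr
  calc ‖x * v * W - r * t * (y * u) * W'‖
      ≤ ‖x * v‖ * ‖W‖ + ‖r‖ * t * ‖y * u‖ * ‖W'‖ := by
        refine (norm_sub_le _ _).trans_eq ?_
        simp only [norm_mul, Complex.norm_real, Real.norm_eq_abs, abs_of_nonneg ht]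
    _ ≤ 3 * B ^ 2 * n ^ 2 * ‖W‖ + ‖r‖ * t * (3 * B ^ 2 * n ^ 2) * ‖W'‖ := by
        gcongr
        · exact hprod hx hv
        · exact hprod hy hu
    _ ≤ 3 * B ^ 2 * n ^ 2 * (1 + ‖r‖ * t) * (‖W‖ + ‖W'‖) := by
        have : 0 ≤ 3 * B ^ 2 * n ^ 2 * (‖r‖ * t * ‖W‖ + ‖W'‖) := by positivity
        linarith

theorem exists_norm_amplTerm_le (k₀ ω μ₀ ε₀ B : ℝ) (WTE WTM : ℕ → ℝ → ℂ)
    (U V : ℕ → ℤ → E3 → Fin 3 → ℂ)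
    (hUV : ∀ n : ℕ, ∀ m : ℤ, ∀ x : E3, ‖x‖ = 1 → ∀ i : Fin 3,
      ‖U n m x i‖ ≤ B * n ∧ ‖V n m x i‖ ≤ B * n) :
    ∃ K ≥ (0 : ℝ), ∀ ρ : ℝ, ∀ c : Fin 3 → ℂ, (∀ j, ‖c j‖ ≤ 1) →
      ∀ khat xhat : E3, ‖khat‖ = 1 → ‖xhat‖ = 1 → ∀ i : Fin 3, ∀ n : ℕ,
        ‖amplTerm k₀ ω μ₀ ε₀ WTE WTM U V ρ c khat xhat i n‖ ≤
          K * n * (‖WTE n ρ‖ + ‖WTM n ρ‖) := by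
  set r : ℂ := 1 / (I * ω * μ₀)
  set t : ℝ := Real.sqrt (μ₀ / ε₀)
  -- The two normalisations give `1/(n(n+1))`, which absorbs the `n²` from the bounds on `U, V`;
  -- summing over the `2n+1` values of `m` leaves one factor `n`.
  refine ⟨24 * Real.pi * ‖(k₀ : ℂ)‖ * B ^ 2 * (1 + ‖r‖ * t), by positivity, ?_⟩
  intro ρ c hc khat xhat hk hx i n
  set w := ‖WTE n ρ‖ + ‖WTM n ρ‖
  have hsum : ∀ m (F : ℕ → ℤ → E3 → Fin 3 → ℂ), (∀ j, ‖F n m khat j‖ ≤ B * n) →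
      ‖∑ j, F n m khat j * c j‖ ≤ 3 * (B * n) := fun m F hF => by
    simpa using norm_sum_mul_le_card_mul hF hc
  calc _ ≤ ∑ m ∈ Icc (-(n : ℤ)) n,
        4 * Real.pi * ‖(k₀ : ℂ)‖ / (n * (n + 1)) * (3 * B ^ 2 * n ^ 2 * (1 + ‖r‖ * t) * w) :=
        norm_sum_le_of_le _ fun m _ => norm_amplTerm_summand_le k₀ B n r (Real.sqrt_nonneg _)
          (hsum m V fun j => (hUV n m khat hk j).2) (hsum m U fun j => (hUV n m khat hk j).1)
          (hUV n m xhat hx i).2 (hUV n m xhat hx i).1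
    _ = (2 * n + 1) * (n ^ 2 / (n * (n + 1))) *
          (12 * Real.pi * ‖(k₀ : ℂ)‖ * B ^ 2 * (1 + ‖r‖ * t) * w) := by
        rw [sum_const, Int.card_Icc, nsmul_eq_mul,
          show (n + 1 - -n : ℤ).toNat = 2 * n + 1 by omega]
        push_cast
        ring
    _ ≤ 2 * n * (12 * Real.pi * ‖(k₀ : ℂ)‖ * B ^ 2 * (1 + ‖r‖ * t) * w) :=
        mul_le_mul_of_nonneg_right (two_mul_add_one_mul_sq_div_le n) (by positivity)
    _ = _ := by ring

theorem svanishing_far_field_small_general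
    (k₀ ω μ₀ ε₀ ρ₀ : ℝ) (N : ℕ)
    (WTE WTM : ℕ → ℝ → ℂ) (U V : ℕ → ℤ → E3 → Fin 3 → ℂ)
    (hUV : ∃ B > (0 : ℝ), ∀ n : ℕ, ∀ m : ℤ, ∀ x : E3, ‖x‖ = 1 → ∀ i : Fin 3,
      ‖U n m x i‖ ≤ B * n ∧ ‖V n m x i‖ ≤ B * n)
    (hdecay : ∃ C > (0 : ℝ), ∀ n : ℕ, 1 ≤ n → ∀ ρ : ℝ, 0 < ρ → ρ ≤ ρ₀ →
      ‖WTE n ρ‖ ≤ C ^ n * ρ ^ (2 * n + 1) / (n : ℝ) ^ (2 * n) ∧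
      ‖WTM n ρ‖ ≤ C ^ n * ρ ^ (2 * n + 1) / (n : ℝ) ^ (2 * n))
    (hsmall : ∀ n : ℕ, 1 ≤ n → n ≤ N → ∀ ε > (0 : ℝ), ∃ δ > (0 : ℝ),
      ∀ ρ : ℝ, 0 < ρ → ρ ≤ δ →
        ‖WTE n ρ‖ ≤ ε * ρ ^ (2 * N + 1) ∧ ‖WTM n ρ‖ ≤ ε * ρ ^ (2 * N + 1)) :
    ∀ ε > (0 : ℝ), ∃ δ > (0 : ℝ), ∀ ρ : ℝ, 0 < ρ → ρ ≤ δ → ρ ≤ ρ₀ →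
      ∀ c : Fin 3 → ℂ, (∀ j, ‖c j‖ ≤ 1) →
      ∀ khat xhat : E3, ‖khat‖ = 1 → ‖xhat‖ = 1 → ∀ i : Fin 3,
        ‖ampl k₀ ω μ₀ ε₀ WTE WTM U V ρ c khat xhat i‖ ≤ ε * ρ ^ (2 * N + 1) := by
  obtain ⟨B, -, hUV⟩ := hUV
  obtain ⟨C, hC, hdecay⟩ := hdecay
  obtain ⟨K, hK, hterm⟩ := exists_norm_amplTerm_le k₀ ω μ₀ ε₀ B WTE WTM U V hUV
  set w : ℕ → ℝ → ℝ := fun n ρ => ‖WTE n ρ‖ + ‖WTM n ρ‖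
  have hhead : ∀ n ∈ range (N + 1),
      (fun ρ => K * n * w n ρ) =o[𝓝[>] 0] fun ρ => ρ ^ (2 * N + 1) := by
    intro n hn
    rcases n.eq_zero_or_pos with rfl | hn₁
    · simp only [CharP.cast_eq_zero, mul_zero, zero_mul]
      exact isLittleO_zero _ _
    · exact (isLittleO_norm_add_norm_of_forall_exists
        (hsmall n hn₁ (Nat.lt_succ_iff.1 (mem_range.1 hn)))).const_mul_left _
  have htail : (fun ρ : ℝ => 4 * K * C ^ (N + 1) * ρ ^ (2 * N + 3)) =o[𝓝[>] 0]
      fun ρ => ρ ^ (2 * N + 1) :=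
    ((isLittleO_pow_pow (by omega)).mono nhdsWithin_le_nhds).const_mul_left _
  have hq : ∀ᶠ ρ in 𝓝[>] 0, C * ρ ^ 2 ≤ 1 / 2 :=
    (((continuous_const.mul (continuous_pow 2)).tendsto' 0 0 (by simp)).mono_left
      nhdsWithin_le_nhds).eventually_le_const (by norm_num)
  intro ε hε
  refine eventually_nhdsGT_iff_exists_Ioc.1 ?_
  filter_upwards [((IsLittleO.fun_sum hhead).add htail).bound hε, hq, self_mem_nhdsWithin]
    with ρ hR hqρ hρ
  intro hρ₀ c hc khat xhat hk hx i
  rw [ampl_eq_tsum_amplTerm]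
  calc _ ≤ ∑ n ∈ range (N + 1), K * n * w n ρ + 4 * K * C ^ (N + 1) * ρ ^ (2 * N + 3) :=
        norm_tsum_le_of_decay N hK hC.le (le_of_lt hρ) hqρ (hterm ρ c hc khat xhat hk hx i)
          fun n hn => by linarith [hdecay n hn ρ hρ hρ₀]
    _ ≤ ε * ρ ^ (2 * N + 1) := by
        rw [← Real.norm_of_nonneg (pow_nonneg (le_of_lt hρ) (2 * N + 1))]
        exact (le_abs_self _).trans hR

/-- If the scattering coefficients of a layered structure satisfy the low-frequency
decay bound `|W_n[ρω]| ≤ Cⁿ ρ^{2n+1}/n^{2n}` and the S-vanishing property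
`W_n[ρω] = o(ρ^{2N+1})` for `1 ≤ n ≤ N`, then the scattering amplitude for plane
wave incidence is `o(ρ^{2N+1})` uniformly in the directions `(k̂, x̂)` and in the
(bounded) polarization `c`. -/
theorem svanishing_far_field_small
    (k₀ ω μ₀ ε₀ ρ₀ : ℝ) (hk : 0 < k₀) (hω : 0 < ω) (hμ : 0 < μ₀) (hε : 0 < ε₀)
    (hρ₀ : 0 < ρ₀) (N : ℕ) (hN : 1 ≤ N)
    (WTE WTM : ℕ → ℝ → ℂ) (U V : ℕ → ℤ → E3 → Fin 3 → ℂ)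
    (hUV : ∃ B > (0 : ℝ), ∀ n : ℕ, ∀ m : ℤ, ∀ x : E3, ‖x‖ = 1 → ∀ i : Fin 3,
      ‖U n m x i‖ ≤ B * n ∧ ‖V n m x i‖ ≤ B * n)
    (hdecay : ∃ C > (0 : ℝ), ∀ n : ℕ, 1 ≤ n → ∀ ρ : ℝ, 0 < ρ → ρ ≤ ρ₀ →
      ‖WTE n ρ‖ ≤ C ^ n * ρ ^ (2 * n + 1) / (n : ℝ) ^ (2 * n) ∧
      ‖WTM n ρ‖ ≤ C ^ n * ρ ^ (2 * n + 1) / (n : ℝ) ^ (2 * n))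
    (hsmall : ∀ n : ℕ, 1 ≤ n → n ≤ N → ∀ ε > (0 : ℝ), ∃ δ > (0 : ℝ),
      ∀ ρ : ℝ, 0 < ρ → ρ ≤ δ →
        ‖WTE n ρ‖ ≤ ε * ρ ^ (2 * N + 1) ∧ ‖WTM n ρ‖ ≤ ε * ρ ^ (2 * N + 1)) :
    ∀ ε > (0 : ℝ), ∃ δ > (0 : ℝ), ∀ ρ : ℝ, 0 < ρ → ρ ≤ δ → ρ ≤ ρ₀ →
      ∀ c : Fin 3 → ℂ, (∀ j, ‖c j‖ ≤ 1) →
      ∀ khat xhat : E3, ‖khat‖ = 1 → ‖xhat‖ = 1 → ∀ i : Fin 3,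
        ‖ampl k₀ ω μ₀ ε₀ WTE WTM U V ρ c khat xhat i‖ ≤ ε * ρ ^ (2 * N + 1) :=
  svanishing_far_field_small_general k₀ ω μ₀ ε₀ ρ₀ N WTE WTM U V hUV hdecay hsmall
end
end
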